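/- arXiv:2304.08790 — 11 statements merged into one kernel-verified Lean document; each statement's English description precedes it below -/
import Mathlib

section
/- For every σ ∈ [0,1) and all reals 0 < c < u, one has (σ−2)·u^(σ−1) − (σ−1)·c·u^(σ−2) + c^(σ−1) > 0. -/
/-- Positivity of h(u) = (σ-2)·u^(σ-1) - (σ-1)·c·u^(σ-2) + c^(σ-1),
the key claim in the proof of Lemma 2. -/
theorem stmt_3 (σ c u : ℝ) (hσ0 : 0 ≤ σ) (hσ1 : σ < 1) (hc : 0 < c) (hcu : c < u) :
    0 < (σ - 2) * u ^ (σ - 1) - (σ - 1) * c * u ^ (σ - 2) + c ^ (σ - 1) := by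
  set f : ℝ → ℝ := fun x => (σ - 2) * x ^ (σ - 1) - (σ - 1) * c * x ^ (σ - 2) + c ^ (σ - 1)
    with hf
  have hderiv : ∀ x ∈ Set.Ioi c, HasDerivAt f
      ((σ - 1) * (σ - 2) * x ^ (σ - 3) * (x - c)) x := by
    intro x hx
    have hx0 : (0:ℝ) < x := hc.trans hx
    have h1 : HasDerivAt (fun y : ℝ => y ^ (σ - 1)) ((σ - 1) * x ^ (σ - 1 - 1)) x :=
      Real.hasDerivAt_rpow_const (Or.inl hx0.ne')
    have h2 : HasDerivAt (fun y : ℝ => y ^ (σ - 2)) ((σ - 2) * x ^ (σ - 2 - 1)) x :=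
      Real.hasDerivAt_rpow_const (Or.inl hx0.ne')
    have h : HasDerivAt f
        ((σ - 2) * ((σ - 1) * x ^ (σ - 1 - 1)) - (σ - 1) * c * ((σ - 2) * x ^ (σ - 2 - 1))) x :=
      ((h1.const_mul (σ - 2)).sub ((h2.const_mul ((σ - 1) * c)))).add_const _
    convert h using 1
    have e1 : σ - 1 - 1 = σ - 2 := by ring
    have e2 : σ - 2 - 1 = σ - 3 := by ring
    rw [e1, e2]
    have e3 : x ^ (σ - 2) = x * x ^ (σ - 3) := by
      have h4 : σ - 2 = 1 + (σ - 3) := by ring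
      rw [h4, Real.rpow_one_add' hx0.le (by intro h; linarith)]
    rw [e3]; ring
  have hcont : ContinuousOn f (Set.Ici c) := by
    intro x hx
    have hx0 : (0:ℝ) < x := lt_of_lt_of_le hc hx
    have : ContinuousAt f x := by
      have c1 : ContinuousAt (fun y : ℝ => y ^ (σ - 1)) x :=
        Real.continuousAt_rpow_const x _ (Or.inl hx0.ne')
      have c2 : ContinuousAt (fun y : ℝ => y ^ (σ - 2)) x :=
        Real.continuousAt_rpow_const x _ (Or.inl hx0.ne')
      exact ((c1.const_smul (σ - 2)).sub (c2.const_smul ((σ - 1) * c))).add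
        continuousAt_const
    exact this.continuousWithinAt
  have hmono : StrictMonoOn f (Set.Ici c) := by
    apply strictMonoOn_of_deriv_pos (convex_Ici c) hcont
    intro x hx
    rw [interior_Ici] at hx
    have hx0 : (0:ℝ) < x := hc.trans hx
    rw [(hderiv x hx).deriv]
    have h12 : 0 < (σ - 1) * (σ - 2) := mul_pos_of_neg_of_neg (by linarith) (by linarith)
    have := Real.rpow_pos_of_pos hx0 (σ - 3)
    exact mul_pos (mul_pos h12 this) (sub_pos.mpr hx)
  have hfc : f c = 0 := by
    have e3 : c ^ (σ - 1) = c * c ^ (σ - 2) := by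
      have h4 : σ - 1 = 1 + (σ - 2) := by ring
      rw [h4, Real.rpow_one_add' hc.le (by intro h; linarith)]
    simp only [hf]
    rw [e3]; ring
  have := hmono (Set.self_mem_Ici) (Set.mem_Ici.mpr hcu.le) hcu
  rw [hfc] at this
  exact this
end

section
/- Fix reals 0 < c < u. (i) If σ ∈ [0,1), let ζ^f = (f(u) − f(c))/(u − c); then t^f = ((σ−1)·(f(c) − ζ^f·c)) / (ζ^f·(2−σ)) lies in [c,u] and is the unique point of [c,u] at which φ^f(c,u,·) attains its maximum over [c,u]. (ii) If σ ∈ (0,1), let ζ^g = (g(u) − g(c))/(u − c); then t^g = (σ·(g(c) − ζ^g·c)) / (ζ^g·(1−σ)) lies in [c,u] and is the unique point of [c,u] at which φ^g(c,u,·) attains its maximum over [c,u]. -/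
/-!
On `[c, u]` both relative errors have the form `t ↦ (A + ζ t) t ^ e + k`, where `A + ζ t` is the
chord (with `e = 1 - σ`, resp. with the signs of the chord of `g` flipped and `e = -σ`). Its
derivative is `ζ (1 + e) (t - τ) t ^ (e - 1)` with `τ = -A e / (ζ (1 + e))`, so when
`ζ (1 + e) < 0` it increases up to `τ` and decreases after it. The relative error vanishes at both
ends of the interval, where the chord interpolates, so `τ` lies strictly inside and is the unique
maximiser.
-/

open Set

noncomputable def fCNL (σ t : ℝ) : ℝ := t ^ (σ - 1)

noncomputable def gCNL (σ t : ℝ) : ℝ := t ^ σ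

noncomputable def fhat (σ c u t : ℝ) : ℝ :=
  fCNL σ c + ((fCNL σ u - fCNL σ c) / (u - c)) * (t - c)

noncomputable def ghat (σ c u t : ℝ) : ℝ :=
  gCNL σ c + ((gCNL σ u - gCNL σ c) / (u - c)) * (t - c)

noncomputable def phiF (σ c u t : ℝ) : ℝ := (fhat σ c u t - fCNL σ t) / fCNL σ t

noncomputable def phiG (σ c u t : ℝ) : ℝ := (gCNL σ t - ghat σ c u t) / gCNL σ t

noncomputable def PhiF (σ c u : ℝ) : ℝ := sSup (phiF σ c u '' Set.Icc c u)

noncomputable def PhiG (σ c u : ℝ) : ℝ := sSup (phiG σ c u '' Set.Icc c u)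

def IsUniqueMaxOn (F : ℝ → ℝ) (s : Set ℝ) (τ : ℝ) : Prop :=
  τ ∈ s ∧ (∀ t ∈ s, F t ≤ F τ) ∧ ∀ x ∈ s, (∀ t ∈ s, F t ≤ F x) → x = τ

theorem IsUniqueMaxOn.congr_add {F φ : ℝ → ℝ} {s : Set ℝ} {τ : ℝ} (h : IsUniqueMaxOn F s τ)
    (k : ℝ) (hφ : ∀ t ∈ s, φ t = F t + k) : IsUniqueMaxOn φ s τ := by
  obtain ⟨hτ, hmax, huniq⟩ := h
  refine ⟨hτ, fun t ht => ?_, fun x hx hx_max => huniq x hx fun t ht => ?_⟩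
  · simpa only [hφ t ht, hφ τ hτ, add_le_add_iff_right] using hmax t ht
  · simpa only [hφ t ht, hφ x hx, add_le_add_iff_right] using hx_max t ht

theorem isUniqueMaxOn_Icc_of_strictMonoOn_of_strictAntiOn {F : ℝ → ℝ} {c τ u : ℝ}
    (hτ : τ ∈ Icc c u) (hmono : StrictMonoOn F (Icc c τ)) (hanti : StrictAntiOn F (Icc τ u)) :
    IsUniqueMaxOn F (Icc c u) τ := by
  have hleft : τ ∈ Icc c τ := ⟨hτ.1, le_rfl⟩
  have hright : τ ∈ Icc τ u := ⟨le_rfl, hτ.2⟩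
  refine ⟨hτ, fun t ht => ?_, fun x hx hx_max => ?_⟩
  · rcases le_total t τ with h | h
    · exact hmono.monotoneOn ⟨ht.1, h⟩ hleft h
    · exact hanti.antitoneOn hright ⟨h, ht.2⟩ h
  · by_contra hne
    refine (hx_max τ hτ).not_gt ?_
    rcases lt_or_gt_of_ne hne with h | h
    · exact hmono ⟨hx.1, h.le⟩ hleft h
    · exact hanti hright ⟨h.le, hx.2⟩ h

section AffineMulRpow

variable {A ζ e τ : ℝ}

theorem hasDerivAt_affine_mul_rpow (hτ : A * e + ζ * (1 + e) * τ = 0) {t : ℝ} (ht : 0 < t) :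
    HasDerivAt (fun t => (A + ζ * t) * t ^ e) (ζ * (1 + e) * (t - τ) * t ^ (e - 1)) t := by
  have hline : HasDerivAt (fun t => A + ζ * t) ζ t := by
    simpa using ((hasDerivAt_id t).const_mul ζ).const_add A
  refine (hline.mul (Real.hasDerivAt_rpow_const (Or.inl ht.ne'))).congr_deriv ?_
  have hpow : t ^ e = t ^ (e - 1) * t := by rw [← Real.rpow_add_one ht.ne', sub_add_cancel]
  rw [hpow]
  linear_combination t ^ (e - 1) * hτ

theorem strictMonoOn_affine_mul_rpow (hq : ζ * (1 + e) < 0) (hτ : A * e + ζ * (1 + e) * τ = 0)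
    {a b : ℝ} (ha : 0 < a) (hb : b ≤ τ) :
    StrictMonoOn (fun t => (A + ζ * t) * t ^ e) (Icc a b) := by
  refine strictMonoOn_of_hasDerivWithinAt_pos (convex_Icc a b)
    (f' := fun t => ζ * (1 + e) * (t - τ) * t ^ (e - 1))
    (fun t ht => (hasDerivAt_affine_mul_rpow hτ (ha.trans_le ht.1)).continuousAt.continuousWithinAt)
    (fun t ht => ?_) (fun t ht => ?_)
  all_goals rw [interior_Icc] at ht
  · exact (hasDerivAt_affine_mul_rpow hτ (ha.trans ht.1)).hasDerivWithinAt
  · exact mul_pos (mul_pos_of_neg_of_neg hq (by linarith [ht.2]))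
      (Real.rpow_pos_of_pos (ha.trans ht.1) _)

theorem strictAntiOn_affine_mul_rpow (hq : ζ * (1 + e) < 0) (hτ : A * e + ζ * (1 + e) * τ = 0)
    {a b : ℝ} (ha : 0 < a) (hτa : τ ≤ a) :
    StrictAntiOn (fun t => (A + ζ * t) * t ^ e) (Icc a b) := by
  refine strictAntiOn_of_hasDerivWithinAt_neg (convex_Icc a b)
    (f' := fun t => ζ * (1 + e) * (t - τ) * t ^ (e - 1))
    (fun t ht => (hasDerivAt_affine_mul_rpow hτ (ha.trans_le ht.1)).continuousAt.continuousWithinAt)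
    (fun t ht => ?_) (fun t ht => ?_)
  all_goals rw [interior_Icc] at ht
  · exact (hasDerivAt_affine_mul_rpow hτ (ha.trans ht.1)).hasDerivWithinAt
  · exact mul_neg_of_neg_of_pos (mul_neg_of_neg_of_pos hq (by linarith [ht.1]))
      (Real.rpow_pos_of_pos (ha.trans ht.1) _)

theorem isUniqueMaxOn_affine_mul_rpow (hq : ζ * (1 + e) < 0) (hτ : A * e + ζ * (1 + e) * τ = 0)
    {c u : ℝ} (hc : 0 < c) (hcu : c < u)
    (hend : (A + ζ * c) * c ^ e = (A + ζ * u) * u ^ e) :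
    IsUniqueMaxOn (fun t => (A + ζ * t) * t ^ e) (Icc c u) τ := by
  have hc_mem : c ∈ Icc c u := left_mem_Icc.2 hcu.le
  have hu_mem : u ∈ Icc c u := right_mem_Icc.2 hcu.le
  have hcτ : c < τ := by
    by_contra! h
    exact (strictAntiOn_affine_mul_rpow hq hτ hc h hc_mem hu_mem hcu).ne' hend
  have hτu : τ < u := by
    by_contra! h
    exact (strictMonoOn_affine_mul_rpow hq hτ hc h hc_mem hu_mem hcu).ne hend
  exact isUniqueMaxOn_Icc_of_strictMonoOn_of_strictAntiOn ⟨hcτ.le, hτu.le⟩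
    (strictMonoOn_affine_mul_rpow hq hτ hc le_rfl)
    (strictAntiOn_affine_mul_rpow hq hτ (hc.trans hcτ) le_rfl)

theorem isUniqueMaxOn_of_eqOn_affine_mul_rpow_add {φ : ℝ → ℝ} {c u : ℝ} (k : ℝ)
    (hq : ζ * (1 + e) < 0) (hτ : A * e + ζ * (1 + e) * τ = 0) (hc : 0 < c) (hcu : c < u)
    (hφ : ∀ t ∈ Icc c u, φ t = (A + ζ * t) * t ^ e + k) (hφc : φ c = 0) (hφu : φ u = 0) :
    IsUniqueMaxOn φ (Icc c u) τ := by
  have hend : (A + ζ * c) * c ^ e = (A + ζ * u) * u ^ e := by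
    have h := hφc.trans hφu.symm
    rwa [hφ c (left_mem_Icc.2 hcu.le), hφ u (right_mem_Icc.2 hcu.le), add_left_inj] at h
  exact (isUniqueMaxOn_affine_mul_rpow hq hτ hc hcu hend).congr_add k hφ

end AffineMulRpow

section Chord

variable {σ c u : ℝ}

theorem isUniqueMaxOn_phiF (hc : 0 < c) (hcu : c < u) (hσ : σ < 1) :
    IsUniqueMaxOn (phiF σ c u) (Icc c u)
      (((σ - 1) * (fCNL σ c - ((fCNL σ u - fCNL σ c) / (u - c)) * c)) /
        (((fCNL σ u - fCNL σ c) / (u - c)) * (2 - σ))) := by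
  set ζ := (fCNL σ u - fCNL σ c) / (u - c)
  have hζ : ζ < 0 :=
    div_neg_of_neg_of_pos (sub_neg.2 (Real.rpow_lt_rpow_of_neg hc hcu (by linarith)))
      (sub_pos.2 hcu)
  refine isUniqueMaxOn_of_eqOn_affine_mul_rpow_add (A := fCNL σ c - ζ * c) (e := 1 - σ) (-1)
    (mul_neg_of_neg_of_pos hζ (by linarith)) ?_ hc hcu (fun t ht => ?_) ?_ ?_
  · have : ζ * (2 - σ) ≠ 0 := mul_ne_zero hζ.ne (by linarith)
    rw [show ζ * (1 + (1 - σ)) = ζ * (2 - σ) by ring, mul_div_cancel₀ _ this]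
    ring
  · have ht0 : 0 < t := hc.trans_le ht.1
    simp only [phiF, fhat, fCNL, ζ]
    rw [show 1 - σ = -(σ - 1) by ring, Real.rpow_neg ht0.le]
    field_simp
    ring
  · simp [phiF, fhat]
  · simp [phiF, fhat, sub_ne_zero.2 hcu.ne']

theorem isUniqueMaxOn_phiG (hc : 0 < c) (hcu : c < u) (hσ₀ : 0 < σ) (hσ₁ : σ < 1) :
    IsUniqueMaxOn (phiG σ c u) (Icc c u)
      ((σ * (gCNL σ c - ((gCNL σ u - gCNL σ c) / (u - c)) * c)) /
        (((gCNL σ u - gCNL σ c) / (u - c)) * (1 - σ))) := by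
  set ζ := (gCNL σ u - gCNL σ c) / (u - c)
  have hζ : 0 < ζ :=
    div_pos (sub_pos.2 (Real.rpow_lt_rpow hc.le hcu hσ₀)) (sub_pos.2 hcu)
  refine isUniqueMaxOn_of_eqOn_affine_mul_rpow_add (A := -(gCNL σ c - ζ * c)) (ζ := -ζ)
    (e := -σ) 1 (mul_neg_of_neg_of_pos (neg_neg_of_pos hζ) (by linarith)) ?_ hc hcu
    (fun t ht => ?_) ?_ ?_
  · have : ζ * (1 - σ) ≠ 0 := mul_ne_zero hζ.ne' (by linarith)
    rw [show -ζ * (1 + -σ) = -(ζ * (1 - σ)) by ring, neg_mul (ζ * (1 - σ)), mul_div_cancel₀ _ this]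
    ring
  · have ht0 : 0 < t := hc.trans_le ht.1
    simp only [phiG, ghat, gCNL, ζ]
    rw [Real.rpow_neg ht0.le]
    field_simp
    ring
  · simp [phiG, ghat]
  · simp [phiG, ghat, sub_ne_zero.2 hcu.ne']

end Chord

/-- Proposition 1: the pointwise relative errors have unique maximizers on [c,u]. -/
theorem stmt_4 (σ c u : ℝ) (hc : 0 < c) (hcu : c < u) :
    (0 ≤ σ → σ < 1 →
      ((σ - 1) * (fCNL σ c - ((fCNL σ u - fCNL σ c) / (u - c)) * c)) /
          (((fCNL σ u - fCNL σ c) / (u - c)) * (2 - σ)) ∈ Set.Icc c u ∧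
      (∀ t ∈ Set.Icc c u, phiF σ c u t ≤
        phiF σ c u (((σ - 1) * (fCNL σ c - ((fCNL σ u - fCNL σ c) / (u - c)) * c)) /
          (((fCNL σ u - fCNL σ c) / (u - c)) * (2 - σ)))) ∧
      (∀ s ∈ Set.Icc c u, (∀ t ∈ Set.Icc c u, phiF σ c u t ≤ phiF σ c u s) →
        s = ((σ - 1) * (fCNL σ c - ((fCNL σ u - fCNL σ c) / (u - c)) * c)) /
          (((fCNL σ u - fCNL σ c) / (u - c)) * (2 - σ)))) ∧
    (0 < σ → σ < 1 →
      (σ * (gCNL σ c - ((gCNL σ u - gCNL σ c) / (u - c)) * c)) /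
          (((gCNL σ u - gCNL σ c) / (u - c)) * (1 - σ)) ∈ Set.Icc c u ∧
      (∀ t ∈ Set.Icc c u, phiG σ c u t ≤
        phiG σ c u ((σ * (gCNL σ c - ((gCNL σ u - gCNL σ c) / (u - c)) * c)) /
          (((gCNL σ u - gCNL σ c) / (u - c)) * (1 - σ)))) ∧
      (∀ s ∈ Set.Icc c u, (∀ t ∈ Set.Icc c u, phiG σ c u t ≤ phiG σ c u s) →
        s = (σ * (gCNL σ c - ((gCNL σ u - gCNL σ c) / (u - c)) * c)) /
          (((gCNL σ u - gCNL σ c) / (u - c)) * (1 - σ)))) := by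
  exact ⟨fun _ hσ => isUniqueMaxOn_phiF hc hcu hσ,
    fun hσ₀ hσ₁ => isUniqueMaxOn_phiG hc hcu hσ₀ hσ₁⟩
end

section
/- Fix σ ∈ [0,1] and a real c > 0. For all reals u, u' with c < u ≤ u', one has Φ^f(c,u) ≤ Φ^f(c,u') and Φ^g(c,u) ≤ Φ^g(c,u'); that is, the maximum relative errors Φ^f(c,·) and Φ^g(c,·) are monotonically non-decreasing in the right endpoint u. -/
/-!
The secant slope of a convex function from a fixed point `c` is non-decreasing in the other
endpoint `u`, and that of a concave function is non-increasing. As `t ↦ t^(σ-1)` is convex and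
`t ↦ t^σ` concave on `(0, ∞)`, moving `u` to the right raises the chord of `f` and lowers that of
`g` at every `t ≥ c`, so both pointwise relative errors increase. The interval `[c, u]` grows at
the same time, and the errors are continuous on it, so the suprema are finite and increase.
-/

open Real Set

lemma convexOn_rpow_of_nonpos {p : ℝ} (hp : p ≤ 0) : ConvexOn ℝ (Ioi 0) fun x : ℝ ↦ x ^ p := by
  refine MonotoneOn.convexOn_of_deriv (convex_Ioi 0) ?_ ?_ ?_
  · exact fun x hx => (continuousAt_rpow_const x p (Or.inl hx.ne')).continuousWithinAt
  · rw [interior_Ioi]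
    exact fun x hx => (differentiableAt_rpow_const_of_ne p hx.ne').differentiableWithinAt
  · rw [interior_Ioi]
    intro x hx y hy hxy
    simp only [Real.deriv_rpow_const]
    exact mul_le_mul_of_nonpos_left (rpow_le_rpow_of_nonpos hx hxy (by linarith)) hp

section Chord

variable {s : Set ℝ} {f : ℝ → ℝ} {c u u' t : ℝ}

lemma ConvexOn.chord_mono_right (hf : ConvexOn ℝ s f) (hc : c ∈ s) (hu : u ∈ s) (hu' : u' ∈ s)
    (hcu : c < u) (huu' : u ≤ u') (hct : c ≤ t) :
    f c + (f u - f c) / (u - c) * (t - c) ≤ f c + (f u' - f c) / (u' - c) * (t - c) := by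
  gcongr ?_ + ?_ * _
  · linarith
  exact hf.secant_mono hc hu hu' hcu.ne' (hcu.trans_le huu').ne' huu'

lemma ConcaveOn.chord_anti_right (hf : ConcaveOn ℝ s f) (hc : c ∈ s) (hu : u ∈ s) (hu' : u' ∈ s)
    (hcu : c < u) (huu' : u ≤ u') (hct : c ≤ t) :
    f c + (f u' - f c) / (u' - c) * (t - c) ≤ f c + (f u - f c) / (u - c) * (t - c) := by
  have h := hf.neg.chord_mono_right hc hu hu' hcu huu' hct
  simp only [Pi.neg_apply] at h
  rw [← neg_le_neg_iff]
  convert h using 1 <;> ring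

end Chord

lemma csSup_image_le_csSup_image_of_le {α : Type*} {s s' : Set α} {φ ψ : α → ℝ}
    (hs : s.Nonempty) (hss' : s ⊆ s') (hψ : BddAbove (ψ '' s')) (hφψ : ∀ t ∈ s, φ t ≤ ψ t) :
    sSup (φ '' s) ≤ sSup (ψ '' s') :=
  csSup_le (hs.image φ) <| forall_mem_image.2 fun t ht =>
    (hφψ t ht).trans (le_csSup hψ (mem_image_of_mem ψ (hss' ht)))

section RelativeErrors

variable {σ c u u' t : ℝ}

lemma phiF_mono_right (hσ1 : σ ≤ 1) (hc : 0 < c) (hcu : c < u) (huu' : u ≤ u') (ht : c ≤ t) :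
    phiF σ c u t ≤ phiF σ c u' t := by
  have hft : 0 < fCNL σ t := rpow_pos_of_pos (hc.trans_le ht) _
  have hfhat : fhat σ c u t ≤ fhat σ c u' t :=
    (convexOn_rpow_of_nonpos (by linarith : σ - 1 ≤ 0)).chord_mono_right hc (hc.trans hcu)
      (hc.trans (hcu.trans_le huu')) hcu huu' ht
  unfold phiF
  gcongr

lemma phiG_mono_right (hσ0 : 0 ≤ σ) (hσ1 : σ ≤ 1) (hc : 0 < c) (hcu : c < u) (huu' : u ≤ u')
    (ht : c ≤ t) : phiG σ c u t ≤ phiG σ c u' t := by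
  have hgt : 0 < gCNL σ t := rpow_pos_of_pos (hc.trans_le ht) _
  have hghat : ghat σ c u' t ≤ ghat σ c u t :=
    (concaveOn_rpow hσ0 hσ1).chord_anti_right hc.le (hc.trans hcu).le
      (hc.trans (hcu.trans_le huu')).le hcu huu' ht
  unfold phiG
  gcongr

lemma continuousOn_phiF : ContinuousOn (phiF σ c u) (Ioi 0) := by
  unfold phiF fhat fCNL
  fun_prop (disch := intro t (ht : 0 < t); positivity)

lemma continuousOn_phiG : ContinuousOn (phiG σ c u) (Ioi 0) := by
  unfold phiG ghat gCNL
  fun_prop (disch := intro t (ht : 0 < t); positivity)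

end RelativeErrors

/-- Proposition 2: the maximum relative errors are non-decreasing in the right endpoint. -/
theorem stmt_5 (σ c : ℝ) (hσ0 : 0 ≤ σ) (hσ1 : σ ≤ 1) (hc : 0 < c) :
    ∀ u u' : ℝ, c < u → u ≤ u' →
      PhiF σ c u ≤ PhiF σ c u' ∧ PhiG σ c u ≤ PhiG σ c u' := by
  intro u u' hcu huu'
  have hne : (Icc c u).Nonempty := nonempty_Icc.2 hcu.le
  have hsub : Icc c u ⊆ Icc c u' := Icc_subset_Icc_right huu'
  have hpos : Icc c u' ⊆ Ioi 0 := fun t ht => hc.trans_le ht.1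
  exact ⟨csSup_image_le_csSup_image_of_le hne hsub
      (isCompact_Icc.bddAbove_image (continuousOn_phiF.mono hpos))
      fun t ht => phiF_mono_right hσ1 hc hcu huu' ht.1,
    csSup_image_le_csSup_image_of_le hne hsub
      (isCompact_Icc.bddAbove_image (continuousOn_phiG.mono hpos))
      fun t ht => phiG_mono_right hσ0 hσ1 hc hcu huu' ht.1⟩
end

section
/- Fix σ ∈ [0,1] and reals 0 < L ≤ c < u ≤ U. Then 2^(σ−2)·(u^(σ−1) + c^(σ−1))/(u+c)^(σ−1) − 1 ≤ Φ^f(c,u) ≤ (c/u)^(σ−1) − 1, and 1 − 2^(σ−1)·(u^σ + c^σ)/(u+c)^σ ≤ Φ^g(c,u) ≤ 1 − (c/u)^σ. -/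
/-- Lemma 4: lower and upper bounds on the maximum relative errors. -/
theorem stmt_8 (σ L U c u : ℝ) (hσ0 : 0 ≤ σ) (hσ1 : σ ≤ 1)
    (hL : 0 < L) (hLc : L ≤ c) (hcu : c < u) (huU : u ≤ U) :
    ((2 : ℝ) ^ (σ - 2) * (u ^ (σ - 1) + c ^ (σ - 1)) / (u + c) ^ (σ - 1) - 1 ≤ PhiF σ c u ∧
      PhiF σ c u ≤ (c / u) ^ (σ - 1) - 1) ∧
    (1 - (2 : ℝ) ^ (σ - 1) * (u ^ σ + c ^ σ) / (u + c) ^ σ ≤ PhiG σ c u ∧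
      PhiG σ c u ≤ 1 - (c / u) ^ σ) := by
  have hc : 0 < c := lt_of_lt_of_le hL hLc
  have hu : 0 < u := hc.trans hcu
  have huc : 0 < u - c := sub_pos.mpr hcu
  have hσ1' : σ - 1 ≤ 0 := by linarith
  have hfu : (0:ℝ) < u ^ (σ - 1) := Real.rpow_pos_of_pos hu _
  have hfc : (0:ℝ) < c ^ (σ - 1) := Real.rpow_pos_of_pos hc _
  have hgc : (0:ℝ) < c ^ σ := Real.rpow_pos_of_pos hc _
  have hgu : (0:ℝ) < u ^ σ := Real.rpow_pos_of_pos hu _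
  have hfuc : u ^ (σ - 1) ≤ c ^ (σ - 1) := Real.rpow_le_rpow_of_nonpos hc hcu.le hσ1'
  have hgcu : c ^ σ ≤ u ^ σ := Real.rpow_le_rpow hc.le hcu.le hσ0
  -- pointwise upper bounds
  have hfub : ∀ t ∈ Set.Icc c u, phiF σ c u t ≤ (c / u) ^ (σ - 1) - 1 := by
    intro t ht
    obtain ⟨htc, htu⟩ := ht
    have ht0 : 0 < t := lt_of_lt_of_le hc htc
    have hft : (0:ℝ) < t ^ (σ - 1) := Real.rpow_pos_of_pos ht0 _
    have hftu : u ^ (σ - 1) ≤ t ^ (σ - 1) := Real.rpow_le_rpow_of_nonpos ht0 htu hσ1'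
    have hchord : fhat σ c u t ≤ c ^ (σ - 1) := by
      have h1 : (fCNL σ u - fCNL σ c) / (u - c) * (t - c) ≤ 0 :=
        mul_nonpos_of_nonpos_of_nonneg
          (div_nonpos_of_nonpos_of_nonneg (by simp [fCNL]; linarith) huc.le) (by linarith)
      simp only [fhat, fCNL] at h1 ⊢
      linarith
    have : phiF σ c u t = fhat σ c u t / t ^ (σ - 1) - 1 := by
      simp only [phiF, fCNL]
      field_simp
    rw [this, Real.div_rpow hc.le hu.le]
    have : fhat σ c u t / t ^ (σ - 1) ≤ c ^ (σ - 1) / u ^ (σ - 1) :=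
      div_le_div₀ hfc.le hchord hfu hftu
    linarith
  have hgub : ∀ t ∈ Set.Icc c u, phiG σ c u t ≤ 1 - (c / u) ^ σ := by
    intro t ht
    obtain ⟨htc, htu⟩ := ht
    have ht0 : 0 < t := lt_of_lt_of_le hc htc
    have hgt : (0:ℝ) < t ^ σ := Real.rpow_pos_of_pos ht0 _
    have hgtu : t ^ σ ≤ u ^ σ := Real.rpow_le_rpow ht0.le htu hσ0
    have hchord : c ^ σ ≤ ghat σ c u t := by
      have h1 : 0 ≤ (gCNL σ u - gCNL σ c) / (u - c) * (t - c) :=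
        mul_nonneg (div_nonneg (by simp [gCNL]; linarith) huc.le) (by linarith)
      simp only [ghat, gCNL] at h1 ⊢
      linarith
    have heq : phiG σ c u t = 1 - ghat σ c u t / t ^ σ := by
      simp only [phiG, gCNL]
      field_simp
    rw [heq, Real.div_rpow hc.le hu.le]
    have : c ^ σ / u ^ σ ≤ ghat σ c u t / t ^ σ :=
      div_le_div₀ (le_trans hgc.le hchord) hchord hgt hgtu
    linarith
  -- bddAbove and nonempty
  have hne : (Set.Icc c u).Nonempty := ⟨c, le_refl c, hcu.le⟩
  have hbddF : BddAbove (phiF σ c u '' Set.Icc c u) :=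
    ⟨(c / u) ^ (σ - 1) - 1, by rintro x ⟨t, ht, rfl⟩; exact hfub t ht⟩
  have hbddG : BddAbove (phiG σ c u '' Set.Icc c u) :=
    ⟨1 - (c / u) ^ σ, by rintro x ⟨t, ht, rfl⟩; exact hgub t ht⟩
  -- midpoint
  set m : ℝ := (c + u) / 2 with hm
  have hmIcc : m ∈ Set.Icc c u := ⟨by rw [hm]; linarith, by rw [hm]; linarith⟩
  have hm0 : 0 < m := lt_of_lt_of_le hc hmIcc.1
  have hcu0 : (0:ℝ) < u + c := by linarith
  have h2 : (0:ℝ) < (2:ℝ) := two_pos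
  have hmf : m ^ (σ - 1) = (u + c) ^ (σ - 1) / 2 ^ (σ - 1) := by
    rw [hm, show (c + u) / 2 = (u + c) / 2 by ring, Real.div_rpow hcu0.le (by norm_num)]
  have hmg : m ^ σ = (u + c) ^ σ / 2 ^ σ := by
    rw [hm, show (c + u) / 2 = (u + c) / 2 by ring, Real.div_rpow hcu0.le (by norm_num)]
  have hmfpos : (0:ℝ) < m ^ (σ - 1) := Real.rpow_pos_of_pos hm0 _
  have hmgpos : (0:ℝ) < m ^ σ := Real.rpow_pos_of_pos hm0 _
  have hucf : (0:ℝ) < (u + c) ^ (σ - 1) := Real.rpow_pos_of_pos hcu0 _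
  have hucg : (0:ℝ) < (u + c) ^ σ := Real.rpow_pos_of_pos hcu0 _
  have h2f : (0:ℝ) < (2:ℝ) ^ (σ - 1) := Real.rpow_pos_of_pos h2 _
  have h2g : (0:ℝ) < (2:ℝ) ^ σ := Real.rpow_pos_of_pos h2 _
  have h2sub : (2:ℝ) ^ (σ - 2) = 2 ^ (σ - 1) / 2 := by
    rw [show σ - 2 = (σ - 1) - 1 by ring, Real.rpow_sub h2, Real.rpow_one]
  have h2sub' : (2:ℝ) ^ (σ - 1) = 2 ^ σ / 2 := by
    rw [Real.rpow_sub h2, Real.rpow_one]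
  have hfhatm : fhat σ c u m = (c ^ (σ - 1) + u ^ (σ - 1)) / 2 := by
    simp only [fhat, fCNL, hm]
    have : (c + u) / 2 - c = (u - c) / 2 := by ring
    rw [this]
    field_simp
    ring
  have hghatm : ghat σ c u m = (c ^ σ + u ^ σ) / 2 := by
    simp only [ghat, gCNL, hm]
    have : (c + u) / 2 - c = (u - c) / 2 := by ring
    rw [this]
    field_simp
    ring
  have hphiFm : phiF σ c u m =
      (2 : ℝ) ^ (σ - 2) * (u ^ (σ - 1) + c ^ (σ - 1)) / (u + c) ^ (σ - 1) - 1 := by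
    simp only [phiF, fCNL, hfhatm, hmf, h2sub]
    field_simp
    ring
  have hphiGm : phiG σ c u m =
      1 - (2 : ℝ) ^ (σ - 1) * (u ^ σ + c ^ σ) / (u + c) ^ σ := by
    simp only [phiG, gCNL, hghatm, hmg, h2sub']
    field_simp
    ring
  refine ⟨⟨?_, ?_⟩, ?_, ?_⟩
  · rw [← hphiFm]
    exact le_csSup hbddF ⟨m, hmIcc, rfl⟩
  · exact csSup_le (hne.image _) (by rintro x ⟨t, ht, rfl⟩; exact hfub t ht)
  · rw [← hphiGm]
    exact le_csSup hbddG ⟨m, hmIcc, rfl⟩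
  · exact csSup_le (hne.image _) (by rintro x ⟨t, ht, rfl⟩; exact hgub t ht)
end

section
/- Fix σ ∈ [0,1), ε > 0 and reals 0 < L < U. Let K ≥ 1 and let L = c_1 < c_2 < ... < c_{K+1} = U satisfy Φ^f(c_k, c_{k+1}) = ε for every k ∈ {1,...,K−1} and Φ^f(c_K, c_{K+1}) ≤ ε. Suppose t^f > 1 is a real satisfying ((t^f)^(σ−1) + 1)/((t^f) + 1)^(σ−1) = 2^(2−σ)·(1+ε). Then ln(U/L)/ln(t^f) ≤ K ≤ (1−σ)·ln(U/L)/ln(1+ε) + 1. -/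
/-!
The function `f(t) = t^(σ-1)` is decreasing, so on `[c, u]` its chord lies below `f(c)` while
`f ≥ f(u)`, giving `Φ^f(c, u) ≤ (u/c)^(1-σ) - 1`; an interval with error exactly `ε` therefore has
`log (u/c) ≥ log (1 + ε) / (1 - σ)`, and summing over the first `K - 1` intervals gives the upper
bound. Conversely, by homogeneity the error at the midpoint of `[c, u]` is
`2^(σ-2) M(u/c) - 1` with `M(x) = (x^(σ-1) + 1) / (x + 1)^(σ-1)` increasing on `[1, ∞)`, so
`Φ^f(c, u) ≤ ε = 2^(σ-2) M(t^f) - 1` forces `u/c ≤ t^f`; summing gives the lower bound.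
-/

open Real Set

lemma sub_le_mul_of_forall_sub_le {x : ℕ → ℝ} {d : ℝ} {m n : ℕ}
    (h : ∀ k, m ≤ k → k < m + n → x (k + 1) - x k ≤ d) : x (m + n) - x m ≤ n * d := by
  induction n with
  | zero => simp
  | succ n ih =>
    have hprev := ih fun k hk hkn => h k hk (by omega)
    have hlast := h (m + n) le_self_add (by omega)
    rw [← add_assoc]
    push_cast
    linarith

lemma mul_le_sub_of_forall_le_sub {x : ℕ → ℝ} {d : ℝ} {m n : ℕ}
    (h : ∀ k, m ≤ k → k < m + n → d ≤ x (k + 1) - x k) : n * d ≤ x (m + n) - x m := by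
  have := sub_le_mul_of_forall_sub_le (x := -x) (d := -d) fun k hk hkn => by
    simp only [Pi.neg_apply]
    linarith [h k hk hkn]
  simp only [Pi.neg_apply] at this
  linarith

lemma strictMonoOn_rpow_add_one_div {a : ℝ} (ha : a < 0) :
    StrictMonoOn (fun x : ℝ => (x ^ a + 1) / (x + 1) ^ a) (Ici 1) := by
  have hasDeriv : ∀ z : ℝ, 0 < z → HasDerivAt (fun x : ℝ => (x ^ a + 1) / (x + 1) ^ a)
      ((a * z ^ (a - 1) * (z + 1) ^ a - (z ^ a + 1) * (a * (z + 1) ^ (a - 1))) /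
        ((z + 1) ^ a) ^ 2) z := by
    intro z hz
    have hnum := (hasDerivAt_rpow_const (p := a) (Or.inl hz.ne')).add_const 1
    have hz1 : 0 < z + 1 := by linarith
    have hden : HasDerivAt (fun x : ℝ => (x + 1) ^ a) (a * (z + 1) ^ (a - 1)) z := by
      simpa [Function.comp_def] using (hasDerivAt_rpow_const (p := a) (Or.inl hz1.ne')).comp z
        ((hasDerivAt_id z).add_const 1)
    exact hnum.div hden (rpow_pos_of_pos hz1 a).ne'
  refine strictMonoOn_of_deriv_pos (convex_Ici 1)
    (fun z hz => (hasDeriv z (one_pos.trans_le hz)).continuousAt.continuousWithinAt) ?_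
  intro z hz
  rw [interior_Ici] at hz
  have hz0 : 0 < z := one_pos.trans hz
  rw [(hasDeriv z hz0).deriv]
  refine div_pos ?_ (by positivity)
  -- the numerator factors as `(-a) (z + 1)^(a - 1) (1 - z^(a - 1))`
  have hpow : z ^ (a - 1) < 1 := rpow_lt_one_of_one_lt_of_neg hz (by linarith)
  have hz1 : (z + 1) ^ a = (z + 1) ^ (a - 1) * (z + 1) := by
    rw [← rpow_add_one (by positivity) (a - 1), sub_add_cancel]
  have hz2 : z ^ a = z ^ (a - 1) * z := by
    rw [← rpow_add_one hz0.ne' (a - 1), sub_add_cancel]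
  rw [hz1, hz2]
  have : 0 < (z + 1) ^ (a - 1) := by positivity
  nlinarith [mul_pos (mul_pos (neg_pos.2 ha) this) (sub_pos.2 hpow)]

section ChordError

variable {σ c u t : ℝ}

lemma fhat_le_fCNL_left (hσ : σ ≤ 1) (hc : 0 < c) (hcu : c ≤ u) (htc : c ≤ t) :
    fhat σ c u t ≤ fCNL σ c := by
  have hslope : (fCNL σ u - fCNL σ c) / (u - c) ≤ 0 :=
    div_nonpos_of_nonpos_of_nonneg
      (sub_nonpos.2 (rpow_le_rpow_of_nonpos hc hcu (by linarith))) (by linarith)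
  unfold fhat
  linarith [mul_nonpos_of_nonpos_of_nonneg hslope (sub_nonneg.2 htc)]

lemma phiF_le (hσ : σ ≤ 1) (hc : 0 < c) (ht : t ∈ Icc c u) :
    phiF σ c u t ≤ fCNL σ c / fCNL σ u - 1 := by
  obtain ⟨htc, htu⟩ := ht
  have ht0 : 0 < t := hc.trans_le htc
  have hft : 0 < fCNL σ t := rpow_pos_of_pos ht0 _
  have hfu : 0 < fCNL σ u := rpow_pos_of_pos (ht0.trans_le htu) _
  have hfc : 0 < fCNL σ c := rpow_pos_of_pos hc _
  have hfut : fCNL σ u ≤ fCNL σ t := rpow_le_rpow_of_nonpos ht0 htu (by linarith)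
  have hle : fhat σ c u t / fCNL σ t ≤ fCNL σ c / fCNL σ u :=
    div_le_div₀ hfc.le (fhat_le_fCNL_left hσ hc (htc.trans htu) htc) hfu hfut
  rw [phiF, sub_div, div_self hft.ne']
  linarith

lemma bddAbove_phiF_image (hσ : σ ≤ 1) (hc : 0 < c) : BddAbove (phiF σ c u '' Icc c u) := by
  refine ⟨fCNL σ c / fCNL σ u - 1, ?_⟩
  rintro _ ⟨t, ht, rfl⟩
  exact phiF_le hσ hc ht

lemma phiF_le_PhiF (hσ : σ ≤ 1) (hc : 0 < c) (ht : t ∈ Icc c u) : phiF σ c u t ≤ PhiF σ c u :=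
  le_csSup (bddAbove_phiF_image hσ hc) (mem_image_of_mem _ ht)

lemma PhiF_le (hσ : σ ≤ 1) (hc : 0 < c) (hcu : c ≤ u) :
    PhiF σ c u ≤ fCNL σ c / fCNL σ u - 1 := by
  refine csSup_le ((nonempty_Icc.2 hcu).image _) ?_
  rintro _ ⟨t, ht, rfl⟩
  exact phiF_le hσ hc ht

/-- At the midpoint the relative error depends only on `u / c`, since `f` is homogeneous. -/
lemma two_rpow_mul_one_add_phiF_midpoint (hc : 0 < c) (hcu : c < u) :
    (2 : ℝ) ^ (2 - σ) * (1 + phiF σ c u ((c + u) / 2))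
      = ((u / c) ^ (σ - 1) + 1) / (u / c + 1) ^ (σ - 1) := by
  set a := σ - 1 with ha
  set r := u / c
  have hr : 0 < r := div_pos (hc.trans hcu) hc
  have hu : u = c * r := (mul_div_cancel₀ u hc.ne').symm
  have hmid : (c + u) / 2 = c * ((r + 1) / 2) := by rw [hu]; ring
  have hfu : fCNL σ u = c ^ a * r ^ a := by rw [fCNL, hu, mul_rpow hc.le hr.le]
  have hfmid : fCNL σ ((c + u) / 2) = c ^ a * ((r + 1) ^ a / 2 ^ a) := by
    rw [fCNL, hmid, mul_rpow hc.le (by positivity), div_rpow (by positivity) zero_le_two]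
  have htwo : (2 : ℝ) ^ (2 - σ) = 2 / 2 ^ a := by
    rw [show 2 - σ = 1 - a by rw [ha]; ring, rpow_sub two_pos, rpow_one]
  have hcu' : u - c ≠ 0 := sub_ne_zero.2 hcu.ne'
  have : 0 < c ^ a := rpow_pos_of_pos hc a
  have : 0 < r ^ a := rpow_pos_of_pos hr a
  have : 0 < (r + 1) ^ a := rpow_pos_of_pos (by positivity) a
  have : 0 < (2 : ℝ) ^ a := rpow_pos_of_pos two_pos a
  rw [htwo, phiF, fhat, hfmid, hfu, show fCNL σ c = c ^ a from rfl]
  field_simp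
  ring

end ChordError

/-- Only the error at the midpoint is used: it is an increasing function of `u / c`. -/
lemma le_mul_of_PhiF_le {σ ε tf c u : ℝ} (hσ : σ < 1) (hc : 0 < c) (hcu : c < u)
    (htf : 1 < tf)
    (htfeq : (tf ^ (σ - 1) + 1) / (tf + 1) ^ (σ - 1) = (2 : ℝ) ^ (2 - σ) * (1 + ε))
    (hPhi : PhiF σ c u ≤ ε) : u ≤ tf * c := by
  have hmid : phiF σ c u ((c + u) / 2) ≤ ε :=
    (phiF_le_PhiF hσ.le hc ⟨by linarith, by linarith⟩).trans hPhi
  have hratio : ((u / c) ^ (σ - 1) + 1) / (u / c + 1) ^ (σ - 1)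
      ≤ (tf ^ (σ - 1) + 1) / (tf + 1) ^ (σ - 1) := by
    rw [← two_rpow_mul_one_add_phiF_midpoint hc hcu, htfeq]
    gcongr
  have hle := (strictMonoOn_rpow_add_one_div (sub_neg.2 hσ)).le_iff_le
    (show 1 ≤ u / c by rw [le_div_iff₀ hc]; linarith) (show 1 ≤ tf from htf.le) |>.1 hratio
  rwa [div_le_iff₀ hc] at hle

lemma log_one_add_le_of_le_PhiF {σ ε c u : ℝ} (hσ : σ ≤ 1) (hc : 0 < c) (hcu : c ≤ u)
    (hε : -1 < ε) (hPhi : ε ≤ PhiF σ c u) :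
    log (1 + ε) ≤ (1 - σ) * (log u - log c) := by
  have hu : 0 < u := hc.trans_le hcu
  have hle : 1 + ε ≤ fCNL σ c / fCNL σ u := by linarith [PhiF_le hσ hc hcu]
  have hlog := log_le_log (by linarith) hle
  rw [fCNL, fCNL, log_div (rpow_pos_of_pos hc _).ne' (rpow_pos_of_pos hu _).ne',
    log_rpow hc, log_rpow hu] at hlog
  linarith

section Partition

variable {K : ℕ} {c : ℕ → ℝ}

lemma pos_of_strictMono_partition (hc : 0 < c 1)
    (hmono : ∀ k, 1 ≤ k → k ≤ K → c k < c (k + 1)) {k : ℕ} (hk : 1 ≤ k) (hkK : k ≤ K + 1) :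
    0 < c k := by
  obtain ⟨n, rfl⟩ := Nat.exists_eq_add_of_le hk
  have := mul_le_sub_of_forall_le_sub (x := c) (d := 0) (m := 1) (n := n)
    fun j hj hjn => sub_nonneg.2 (hmono j hj (by omega)).le
  linarith

lemma log_sub_log_le_mul_log_of_PhiF_le {σ ε tf : ℝ} (hσ : σ < 1) (hc : 0 < c 1)
    (hmono : ∀ k, 1 ≤ k → k ≤ K → c k < c (k + 1))
    (hPhi : ∀ k, 1 ≤ k → k ≤ K → PhiF σ (c k) (c (k + 1)) ≤ ε) (htf : 1 < tf)
    (htfeq : (tf ^ (σ - 1) + 1) / (tf + 1) ^ (σ - 1) = (2 : ℝ) ^ (2 - σ) * (1 + ε)) :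
    log (c (1 + K)) - log (c 1) ≤ K * log tf := by
  refine sub_le_mul_of_forall_sub_le (x := fun k => log (c k)) fun k hk hkK => ?_
  have hck := pos_of_strictMono_partition hc hmono hk (by omega)
  have hstep := le_mul_of_PhiF_le hσ hck (hmono k hk (by omega)) htf htfeq (hPhi k hk (by omega))
  have hlog := log_le_log (pos_of_strictMono_partition hc hmono (by omega) (by omega)) hstep
  rw [log_mul (by linarith) hck.ne'] at hlog
  linarith

lemma mul_log_one_add_le_of_PhiF_eq {σ ε : ℝ} (hσ : σ < 1) (hε : 0 < ε) (hK : 1 ≤ K)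
    (hc : 0 < c 1) (hmono : ∀ k, 1 ≤ k → k ≤ K → c k < c (k + 1))
    (heq : ∀ k, 1 ≤ k → k ≤ K - 1 → PhiF σ (c k) (c (k + 1)) = ε) :
    (K - 1) * log (1 + ε) ≤ (1 - σ) * (log (c (1 + K)) - log (c 1)) := by
  have hsum := mul_le_sub_of_forall_le_sub (x := fun k => (1 - σ) * log (c k))
    (d := log (1 + ε)) (m := 1) (n := K - 1) fun k hk hkK => by
      have := log_one_add_le_of_le_PhiF hσ.le (pos_of_strictMono_partition hc hmono hk (by omega))
        (hmono k hk (by omega)).le (by linarith) (heq k hk (by omega)).ge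
      linarith
  have hlast : log (c K) ≤ log (c (1 + K)) :=
    log_le_log (pos_of_strictMono_partition hc hmono hK (by omega))
      (add_comm 1 K ▸ hmono K hK le_rfl).le
  have := mul_le_mul_of_nonneg_left hlast (sub_nonneg.2 hσ.le)
  rw [Nat.add_sub_cancel' hK, Nat.cast_sub hK, Nat.cast_one] at hsum
  linarith

end Partition

theorem stmt_9_general (σ ε L U : ℝ) (hσ1 : σ < 1) (hε : 0 < ε)
    (hL : 0 < L)
    (K : ℕ) (hK : 1 ≤ K) (c : ℕ → ℝ)
    (hc1 : c 1 = L) (hcK : c (K + 1) = U)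
    (hmono : ∀ k, 1 ≤ k → k ≤ K → c k < c (k + 1))
    (heq : ∀ k, 1 ≤ k → k ≤ K - 1 → PhiF σ (c k) (c (k + 1)) = ε)
    (hlast : PhiF σ (c K) (c (K + 1)) ≤ ε)
    (tf : ℝ) (htf : 1 < tf)
    (htfeq : (tf ^ (σ - 1) + 1) / (tf + 1) ^ (σ - 1) = (2 : ℝ) ^ (2 - σ) * (1 + ε)) :
    Real.log (U / L) / Real.log tf ≤ (K : ℝ) ∧
    (K : ℝ) ≤ (1 - σ) * Real.log (U / L) / Real.log (1 + ε) + 1 := by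
  have hc : 0 < c 1 := hc1 ▸ hL
  have hPhi : ∀ k, 1 ≤ k → k ≤ K → PhiF σ (c k) (c (k + 1)) ≤ ε := by
    intro k hk hkK
    rcases hkK.lt_or_eq with hlt | rfl
    · exact (heq k hk (by omega)).le
    · exact hlast
  have hU : 0 < U := hcK ▸ pos_of_strictMono_partition hc hmono (by omega) le_rfl
  have hlogUL : log (U / L) = log (c (1 + K)) - log (c 1) := by
    rw [add_comm, hcK, hc1, log_div hU.ne' hL.ne']
  constructor
  · rw [div_le_iff₀ (log_pos htf), hlogUL]
    exact log_sub_log_le_mul_log_of_PhiF_le hσ1 hc hmono hPhi htf htfeq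
  · rw [← sub_le_iff_le_add, le_div_iff₀ (log_pos (by linarith)), hlogUL]
    exact mul_log_one_add_le_of_PhiF_eq hσ1 hε hK hc hmono heq

/-- Lemma 5 (part for f): bounds on the number of sub-intervals needed to
approximate f to relative error ε. -/
theorem stmt_9 (σ ε L U : ℝ) (hσ0 : 0 ≤ σ) (hσ1 : σ < 1) (hε : 0 < ε)
    (hL : 0 < L) (hLU : L < U)
    (K : ℕ) (hK : 1 ≤ K) (c : ℕ → ℝ)
    (hc1 : c 1 = L) (hcK : c (K + 1) = U)
    (hmono : ∀ k, 1 ≤ k → k ≤ K → c k < c (k + 1))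
    (heq : ∀ k, 1 ≤ k → k ≤ K - 1 → PhiF σ (c k) (c (k + 1)) = ε)
    (hlast : PhiF σ (c K) (c (K + 1)) ≤ ε)
    (tf : ℝ) (htf : 1 < tf)
    (htfeq : (tf ^ (σ - 1) + 1) / (tf + 1) ^ (σ - 1) = (2 : ℝ) ^ (2 - σ) * (1 + ε)) :
    Real.log (U / L) / Real.log tf ≤ (K : ℝ) ∧
    (K : ℝ) ≤ (1 - σ) * Real.log (U / L) / Real.log (1 + ε) + 1 :=
  stmt_9_general σ ε L U hσ1 hε hL K hK c hc1 hcK hmono heq hlast tf htf htfeq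
end

section
/- Fix σ ∈ (0,1), ε ∈ (0,1) and reals 0 < L < U. Let K ≥ 1 and let L = c_1 < c_2 < ... < c_{K+1} = U satisfy Φ^g(c_k, c_{k+1}) = ε for every k ∈ {1,...,K−1} and Φ^g(c_K, c_{K+1}) ≤ ε. Suppose t^g > 1 is a real satisfying ((t^g)^σ + 1)/((t^g) + 1)^σ = 2^(1−σ)·(1−ε). Then ln(U/L)/ln(t^g) ≤ K ≤ −σ·ln(U/L)/ln(1−ε) + 1. -/
open Real Set

noncomputable def rpowSumRatio (σ r : ℝ) : ℝ := (r ^ σ + 1) / (r + 1) ^ σ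

lemma strictAntiOn_rpowSumRatio {σ : ℝ} (hσ0 : 0 < σ) (hσ1 : σ < 1) :
    StrictAntiOn (rpowSumRatio σ) (Ici 1) := by
  have hderiv : ∀ r : ℝ, 0 < r → HasDerivAt (rpowSumRatio σ)
      (σ * (r + 1) ^ (σ - 1) * (r ^ (σ - 1) - 1) / ((r + 1) ^ σ) ^ 2) r := by
    intro r hr
    have hnum := (hasDerivAt_rpow_const (p := σ) (Or.inl hr.ne')).add_const 1
    have hden := ((hasDerivAt_id' r).add_const 1).rpow_const (p := σ) (Or.inl (by positivity))
    refine (hnum.div hden (by positivity)).congr_deriv ?_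
    rw [rpow_sub_one hr.ne', rpow_sub_one (by positivity : r + 1 ≠ 0)]
    field_simp
    ring
  refine strictAntiOn_of_deriv_neg (convex_Ici 1)
    (fun r hr => (hderiv r (zero_lt_one.trans_le hr)).continuousAt.continuousWithinAt) ?_
  intro r hr
  rw [interior_Ici, mem_Ioi] at hr
  rw [(hderiv r (by linarith)).deriv]
  have hlt : r ^ (σ - 1) < 1 := rpow_lt_one_of_one_lt_of_neg hr (by linarith)
  exact div_neg_of_neg_of_pos
    (mul_neg_of_pos_of_neg (by positivity) (by linarith)) (by positivity)

lemma phiG_le_one_sub_rpow_div {σ c u t : ℝ} (hσ : 0 ≤ σ) (hc : 0 < c) (ht : t ∈ Icc c u) :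
    phiG σ c u t ≤ 1 - (c / u) ^ σ := by
  obtain ⟨htc, htu⟩ := ht
  have ht0 : 0 < t := hc.trans_le htc
  have hu0 : 0 < u := ht0.trans_le htu
  have hgt : c ^ σ ≤ ghat σ c u t := by
    have hslope : 0 ≤ (u ^ σ - c ^ σ) / (u - c) :=
      div_nonneg (by linarith [rpow_le_rpow hc.le (htc.trans htu) hσ]) (by linarith)
    unfold ghat gCNL
    nlinarith [mul_nonneg hslope (by linarith : (0:ℝ) ≤ t - c)]
  have htu' : t ^ σ ≤ u ^ σ := rpow_le_rpow ht0.le htu hσ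
  unfold phiG
  rw [div_rpow hc.le hu0.le, gCNL, div_le_iff₀ (by positivity)]
  have : c ^ σ / u ^ σ * t ^ σ ≤ c ^ σ := by
    rw [div_mul_eq_mul_div, div_le_iff₀ (by positivity)]
    exact mul_le_mul_of_nonneg_left htu' (by positivity)
  linarith

lemma bddAbove_phiG_image {σ c u : ℝ} (hσ : 0 ≤ σ) (hc : 0 < c) :
    BddAbove (phiG σ c u '' Icc c u) :=
  ⟨1 - (c / u) ^ σ, by rintro _ ⟨t, ht, rfl⟩; exact phiG_le_one_sub_rpow_div hσ hc ht⟩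

lemma PhiG_le_one_sub_rpow_div {σ c u : ℝ} (hσ : 0 ≤ σ) (hc : 0 < c) (hcu : c ≤ u) :
    PhiG σ c u ≤ 1 - (c / u) ^ σ :=
  csSup_le ((nonempty_Icc.2 hcu).image _) <| by
    rintro _ ⟨t, ht, rfl⟩; exact phiG_le_one_sub_rpow_div hσ hc ht

lemma phiG_le_PhiG {σ c u t : ℝ} (hσ : 0 ≤ σ) (hc : 0 < c) (ht : t ∈ Icc c u) :
    phiG σ c u t ≤ PhiG σ c u :=
  le_csSup (bddAbove_phiG_image hσ hc) (mem_image_of_mem _ ht)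

lemma phiG_midpoint {σ c u : ℝ} (hc : 0 < c) (hcu : c < u) :
    phiG σ c u ((c + u) / 2) = 1 - 2 ^ (σ - 1) * rpowSumRatio σ (u / c) := by
  have hu : 0 < u := hc.trans hcu
  have hsum : u / c + 1 = (c + u) / c := by field_simp; ring
  unfold phiG ghat gCNL rpowSumRatio
  rw [hsum, div_rpow hu.le hc.le, div_rpow (by positivity) hc.le,
    div_rpow (by positivity) two_pos.le, rpow_sub_one two_ne_zero]
  have : u - c ≠ 0 := by linarith
  field_simp
  ring

lemma le_mul_of_PhiG_le {σ ε c u tg : ℝ} (hσ0 : 0 < σ) (hσ1 : σ < 1) (hc : 0 < c) (hcu : c < u)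
    (htg : 1 ≤ tg) (htgeq : rpowSumRatio σ tg = 2 ^ (1 - σ) * (1 - ε))
    (h : PhiG σ c u ≤ ε) : u ≤ tg * c := by
  have hmid : 1 - 2 ^ (σ - 1) * rpowSumRatio σ (u / c) ≤ ε := by
    rw [← phiG_midpoint hc hcu]
    exact (phiG_le_PhiG hσ0.le hc ⟨by linarith, by linarith⟩).trans h
  have hratio : rpowSumRatio σ tg ≤ rpowSumRatio σ (u / c) := by
    have h2 : (2:ℝ) ^ (1 - σ) * 2 ^ (σ - 1) = 1 := by
      rw [← rpow_add two_pos]; norm_num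
    calc rpowSumRatio σ tg = 2 ^ (1 - σ) * (1 - ε) := htgeq
      _ ≤ 2 ^ (1 - σ) * (2 ^ (σ - 1) * rpowSumRatio σ (u / c)) :=
        mul_le_mul_of_nonneg_left (by linarith) (by positivity)
      _ = rpowSumRatio σ (u / c) := by rw [← mul_assoc, h2, one_mul]
  have hrc : 1 ≤ u / c := (one_le_div hc).2 hcu.le
  rw [← div_le_iff₀ hc]
  exact ((strictAntiOn_rpowSumRatio hσ0 hσ1).le_iff_ge htg hrc).1 hratio

lemma inv_one_sub_mul_rpow_le_of_le_PhiG {σ ε c u : ℝ} (hσ : 0 ≤ σ) (hε : ε < 1) (hc : 0 < c)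
    (hcu : c ≤ u) (h : ε ≤ PhiG σ c u) : (1 - ε)⁻¹ * c ^ σ ≤ u ^ σ := by
  have hu : 0 < u := hc.trans_le hcu
  have hratio : c ^ σ / u ^ σ ≤ 1 - ε := by
    rw [← div_rpow hc.le hu.le]
    linarith [h.trans (PhiG_le_one_sub_rpow_div hσ hc hcu)]
  rw [inv_mul_le_iff₀ (sub_pos.2 hε)]
  exact (div_le_iff₀ (by positivity)).1 hratio

lemma pos_of_pos_of_lt_succ {a : ℕ → ℝ} {n : ℕ} (h0 : 0 < a 0)
    (ha : ∀ k < n, a k < a (k + 1)) : ∀ k ≤ n, 0 < a k := by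
  intro k hk
  induction k with
  | zero => exact h0
  | succ k ih => exact (ih (by omega)).trans (ha k (by omega))

lemma le_pow_mul_of_PhiG_le {σ ε tg : ℝ} {a : ℕ → ℝ} {n : ℕ} (hσ0 : 0 < σ) (hσ1 : σ < 1)
    (htg : 1 ≤ tg) (htgeq : rpowSumRatio σ tg = 2 ^ (1 - σ) * (1 - ε)) (h0 : 0 < a 0)
    (ha : ∀ k < n, a k < a (k + 1)) (hPhi : ∀ k < n, PhiG σ (a k) (a (k + 1)) ≤ ε) :
    a n ≤ tg ^ n * a 0 :=
  le_geom (by linarith) n fun k hk => le_mul_of_PhiG_le hσ0 hσ1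
    (pos_of_pos_of_lt_succ h0 ha k hk.le) (ha k hk) htg htgeq (hPhi k hk)

lemma inv_one_sub_pow_mul_rpow_le_of_le_PhiG {σ ε : ℝ} {a : ℕ → ℝ} {n : ℕ} (hσ : 0 ≤ σ)
    (hε : ε < 1) (h0 : 0 < a 0) (ha : ∀ k < n, a k < a (k + 1))
    (hPhi : ∀ k < n, ε ≤ PhiG σ (a k) (a (k + 1))) :
    (1 - ε)⁻¹ ^ n * a 0 ^ σ ≤ a n ^ σ :=
  geom_le (u := fun k => a k ^ σ) (inv_pos.2 (sub_pos.2 hε)).le n fun k hk =>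
    inv_one_sub_mul_rpow_le_of_le_PhiG hσ hε (pos_of_pos_of_lt_succ h0 ha k hk.le)
      (ha k hk).le (hPhi k hk)

/-- Lemma 5 (part for g): bounds on the number of sub-intervals needed to
approximate g to relative error ε. -/
theorem stmt_10 (σ ε L U : ℝ) (hσ0 : 0 < σ) (hσ1 : σ < 1) (hε0 : 0 < ε) (hε1 : ε < 1)
    (hL : 0 < L) (hLU : L < U)
    (K : ℕ) (hK : 1 ≤ K) (c : ℕ → ℝ)
    (hc1 : c 1 = L) (hcK : c (K + 1) = U)
    (hmono : ∀ k, 1 ≤ k → k ≤ K → c k < c (k + 1))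
    (heq : ∀ k, 1 ≤ k → k ≤ K - 1 → PhiG σ (c k) (c (k + 1)) = ε)
    (hlast : PhiG σ (c K) (c (K + 1)) ≤ ε)
    (tg : ℝ) (htg : 1 < tg)
    (htgeq : (tg ^ σ + 1) / (tg + 1) ^ σ = (2 : ℝ) ^ (1 - σ) * (1 - ε)) :
    Real.log (U / L) / Real.log tg ≤ (K : ℝ) ∧
    (K : ℝ) ≤ -σ * Real.log (U / L) / Real.log (1 - ε) + 1 := by
  obtain ⟨n, rfl⟩ : ∃ n, K = n + 1 := ⟨K - 1, by omega⟩
  set a : ℕ → ℝ := fun k => c (k + 1)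
  have ha0 : a 0 = L := hc1
  have hstep : ∀ k < n + 1, a k < a (k + 1) := fun k hk => hmono (k + 1) (by omega) hk
  have hfull : ∀ k < n, PhiG σ (a k) (a (k + 1)) = ε :=
    fun k hk => heq (k + 1) (by omega) (by omega)
  have hlogε : log (1 - ε) < 0 := log_neg (by linarith) (by linarith)
  constructor
  · have hgeom : U ≤ tg ^ (n + 1) * L := hcK ▸ ha0 ▸ le_pow_mul_of_PhiG_le hσ0 hσ1 htg.le htgeq
      (ha0 ▸ hL) hstep fun k hk => (Nat.lt_succ_iff.1 hk).lt_or_eq.elim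
        (fun hk => (hfull k hk).le) (by rintro rfl; exact hlast)
    rw [div_le_iff₀ (log_pos htg), ← log_pow]
    exact log_le_log (div_pos (hL.trans hLU) hL) ((div_le_iff₀ hL).2 hgeom)
  · have hgeom : (1 - ε)⁻¹ ^ n * L ^ σ ≤ U ^ σ :=
      calc (1 - ε)⁻¹ ^ n * L ^ σ ≤ a n ^ σ := ha0 ▸ inv_one_sub_pow_mul_rpow_le_of_le_PhiG hσ0.le
            hε1 (ha0 ▸ hL) (fun k hk => hstep k (by omega)) fun k hk => (hfull k hk).ge
        _ ≤ U ^ σ := rpow_le_rpow (pos_of_pos_of_lt_succ (ha0 ▸ hL) hstep n (by omega)).le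
            (hcK ▸ (hstep n (by omega)).le) hσ0.le
    have hlog := log_le_log (by positivity) hgeom
    rw [log_mul (by positivity) (by positivity), log_pow, log_inv, log_rpow hL,
      log_rpow (by linarith)] at hlog
    push_cast
    rw [log_div (by linarith) hL.ne', ← sub_le_iff_le_add, add_sub_cancel_right,
      le_div_iff_of_neg hlogε]
    linarith
end

section
/- For every σ ∈ (0,1), the function ρ(t) = ln(t^σ + 1) − σ·ln(t + 1) is strictly decreasing on [1, ∞), satisfies ρ(t) > 0 for all t ≥ 1, and ρ(t) → 0 as t → +∞. -/
/-!
Writing `ρ(t) = log (1 + t^(-σ)) - σ log (1 + 1/t)` shows `ρ → 0` at infinity. On `(1, ∞)` the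
sign of `ρ'` is that of `t^(σ-1) (t + 1) - (t^σ + 1) = t^(σ-1) - 1 < 0`, so `ρ` is strictly
decreasing, and a strictly decreasing function with limit `0` is positive.
-/

open Filter Real Set Topology

theorem StrictAntiOn.lt_of_tendsto_atTop {α β : Type*} [LinearOrder α] [NoMaxOrder α]
    [TopologicalSpace β] [Preorder β] [OrderClosedTopology β] {f : α → β} {a t : α} {l : β}
    (hf : StrictAntiOn f (Ici a)) (hl : Tendsto f atTop (𝓝 l)) (ht : a ≤ t) : l < f t := by
  obtain ⟨u, hu⟩ := exists_gt t
  have hau : a ≤ u := ht.trans hu.le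
  have : Nonempty α := ⟨a⟩
  have hlu : l ≤ f u := le_of_tendsto hl <| (eventually_ge_atTop u).mono fun v hv =>
    hf.antitoneOn hau (hau.trans hv) hv
  exact hlu.trans_lt (hf ht hau hu)

noncomputable def rho (σ t : ℝ) : ℝ := log (t ^ σ + 1) - σ * log (t + 1)

theorem hasDerivAt_rho {σ x : ℝ} (hx : 0 < x) :
    HasDerivAt (rho σ) (σ * x ^ (σ - 1) / (x ^ σ + 1) - σ * (1 / (x + 1))) x := by
  have hpow : HasDerivAt (fun t => t ^ σ + 1) (σ * x ^ (σ - 1)) x :=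
    (hasDerivAt_rpow_const (Or.inl hx.ne')).add_const 1
  have hlin : HasDerivAt (fun t => t + 1) 1 x := (hasDerivAt_id x).add_const 1
  exact (hpow.log (by positivity)).sub ((hlin.log (by positivity)).const_mul σ)

theorem rpow_sub_one_mul_add_one_lt {σ x : ℝ} (hσ1 : σ < 1) (hx : 1 < x) :
    x ^ (σ - 1) * (x + 1) < x ^ σ + 1 := by
  have hmul : x ^ (σ - 1) * x = x ^ σ := by
    rw [← rpow_add_one (by positivity)]; ring_nf
  nlinarith [rpow_lt_one_of_one_lt_of_neg hx (by linarith : σ - 1 < 0)]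

theorem strictAntiOn_rho {σ : ℝ} (hσ0 : 0 < σ) (hσ1 : σ < 1) : StrictAntiOn (rho σ) (Ici 1) := by
  refine strictAntiOn_of_hasDerivWithinAt_neg (convex_Ici 1)
    (fun x hx => (hasDerivAt_rho (zero_lt_one.trans_le hx)).continuousAt.continuousWithinAt)
    (fun x hx => (hasDerivAt_rho (zero_lt_one.trans_le (interior_subset hx))).hasDerivWithinAt)
    fun x hx => ?_
  rw [interior_Ici] at hx
  have hx : 1 < x := hx
  rw [sub_neg, mul_one_div, div_lt_div_iff₀ (by positivity) (by positivity)]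
  nlinarith [rpow_sub_one_mul_add_one_lt hσ1 hx]

theorem rho_eq_log_one_add {σ t : ℝ} (ht : 0 < t) :
    rho σ t = log (1 + t ^ (-σ)) - σ * log (1 + t⁻¹) := by
  have hpow : t ^ σ + 1 = t ^ σ * (1 + t ^ (-σ)) := by
    rw [mul_add, mul_one, ← rpow_add ht, add_neg_cancel, rpow_zero]
  have hlin : t + 1 = t * (1 + t⁻¹) := by field_simp
  rw [rho, hpow, hlin, log_mul (by positivity) (by positivity),
    log_mul (by positivity) (by positivity), log_rpow ht]
  ring

theorem tendsto_rho_atTop {σ : ℝ} (hσ0 : 0 < σ) : Tendsto (rho σ) atTop (𝓝 0) := by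
  have hpow : Tendsto (fun t : ℝ => log (1 + t ^ (-σ))) atTop (𝓝 0) := by
    simpa using ((tendsto_rpow_neg_atTop hσ0).const_add 1).log (by norm_num)
  have hinv : Tendsto (fun t : ℝ => log (1 + t⁻¹)) atTop (𝓝 0) := by
    simpa using (tendsto_inv_atTop_zero.const_add 1).log (by norm_num)
  have hlim := hpow.sub (hinv.const_mul σ)
  rw [mul_zero, sub_zero] at hlim
  refine hlim.congr' ?_
  filter_upwards [eventually_gt_atTop 0] with t ht
  exact (rho_eq_log_one_add ht).symm

/-- ρ(t) = ln(t^σ + 1) − σ·ln(t+1) is strictly decreasing on [1,∞), positive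
there, and tends to 0. -/
theorem stmt_12 (σ : ℝ) (hσ0 : 0 < σ) (hσ1 : σ < 1) :
    StrictAntiOn (fun t : ℝ => Real.log (t ^ σ + 1) - σ * Real.log (t + 1)) (Set.Ici 1) ∧
    (∀ t : ℝ, 1 ≤ t → 0 < Real.log (t ^ σ + 1) - σ * Real.log (t + 1)) ∧
    Filter.Tendsto (fun t : ℝ => Real.log (t ^ σ + 1) - σ * Real.log (t + 1))
      Filter.atTop (nhds 0) :=
  ⟨strictAntiOn_rho hσ0 hσ1,
    fun _ ht => (strictAntiOn_rho hσ0 hσ1).lt_of_tendsto_atTop (tendsto_rho_atTop hσ0) ht,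
    tendsto_rho_atTop hσ0⟩
end

section
/- Fix σ ∈ [0,1). (i) For every ε > 0 there exists a unique real t ∈ [1, ∞) such that (t^(σ−1) + 1)/(t + 1)^(σ−1) = 2^(2−σ)·(1+ε), and this solution satisfies t > 1. (ii) If moreover σ ∈ (0,1), then for every ε ∈ (0, 1 − 2^(σ−1)) there exists a unique real t ∈ [1, ∞) such that (t^σ + 1)/(t + 1)^σ = 2^(1−σ)·(1−ε), and this solution satisfies t > 1. -/
/-!
Both left-hand sides are `r_a(t) = (t ^ a + 1) / (t + 1) ^ a` with `a = σ - 1` and `a = σ`, and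
`r_a(1) = 2 ^ (1 - a)`. Since `r_a'(t) = a (t + 1) ^ (a - 1) (t ^ (a - 1) - 1) / (t + 1) ^ (2a)` and
`t ^ (a - 1) < 1` for `t > 1`, `r_a` is strictly increasing on `[1, ∞)` when `a < 0`, with
`r_a(t) ≥ (t + 1) ^ (-a) → ∞`, and strictly decreasing when `0 < a < 1`, with `r_a(t) → 1`.
The intermediate value theorem and injectivity then give a unique solution for every value in
`(2 ^ (1 - a), ∞)`, resp. in `(1, 2 ^ (1 - a))`, and it is not `t = 1` because the target differs
from `r_a(1)`.
-/

open Set Filter Topology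

lemma existsUnique_eq_of_injOn_Ici {f : ℝ → ℝ} {c : ℝ} (hf : ContinuousOn f (Ici 1))
    (hinj : InjOn f (Ici 1)) {T : ℝ} (hT : 1 ≤ T) (hc : c ∈ uIcc (f 1) (f T)) :
    ∃! t, 1 ≤ t ∧ f t = c := by
  have hsub : uIcc 1 T ⊆ Ici 1 := by
    rw [uIcc_of_le hT]
    exact Icc_subset_Ici_self
  obtain ⟨t, ht, rfl⟩ := intermediate_value_uIcc (hf.mono hsub) hc
  exact ⟨t, ⟨hsub ht, rfl⟩, fun s ⟨hs, hst⟩ => hinj hs (hsub ht) hst⟩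

noncomputable def powRatio (a t : ℝ) : ℝ := (t ^ a + 1) / (t + 1) ^ a

lemma powRatio_one (a : ℝ) : powRatio a 1 = 2 ^ (1 - a) := by
  rw [powRatio, Real.one_rpow, Real.rpow_sub two_pos, Real.rpow_one]
  norm_num

lemma hasDerivAt_powRatio (a : ℝ) {t : ℝ} (ht : 0 < t) :
    HasDerivAt (powRatio a)
      (a * (t + 1) ^ (a - 1) * (t ^ (a - 1) - 1) / ((t + 1) ^ a) ^ 2) t := by
  have ht1 : 0 < t + 1 := by linarith
  have hnum : HasDerivAt (fun s : ℝ => s ^ a + 1) (a * t ^ (a - 1)) t :=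
    (Real.hasDerivAt_rpow_const (Or.inl ht.ne')).add_const 1
  have hden : HasDerivAt (fun s : ℝ => (s + 1) ^ a) (a * (t + 1) ^ (a - 1)) t := by
    simpa using ((hasDerivAt_id t).add_const 1).rpow_const (p := a) (Or.inl ht1.ne')
  refine (hnum.div hden (Real.rpow_pos_of_pos ht1 a).ne').congr_deriv ?_
  rw [Real.rpow_sub ht1, Real.rpow_sub ht, Real.rpow_one, Real.rpow_one]
  field_simp
  ring

lemma continuousOn_powRatio (a : ℝ) : ContinuousOn (powRatio a) (Ici 1) := fun _ ht =>
  (hasDerivAt_powRatio a (one_pos.trans_le ht)).continuousAt.continuousWithinAt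

lemma strictMonoOn_powRatio {a : ℝ} (ha : a < 0) : StrictMonoOn (powRatio a) (Ici 1) := by
  refine strictMonoOn_of_deriv_pos (convex_Ici 1) (continuousOn_powRatio a) fun t ht => ?_
  rw [interior_Ici, mem_Ioi] at ht
  rw [(hasDerivAt_powRatio a (one_pos.trans ht)).deriv]
  have hpow : t ^ (a - 1) < 1 := Real.rpow_lt_one_of_one_lt_of_neg ht (by linarith)
  have hpos : 0 < (t + 1) ^ (a - 1) := Real.rpow_pos_of_pos (by linarith) _
  exact div_pos (mul_pos_of_neg_of_neg (mul_neg_of_neg_of_pos ha hpos) (by linarith))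
    (by positivity)

lemma strictAntiOn_powRatio {a : ℝ} (ha₀ : 0 < a) (ha₁ : a < 1) :
    StrictAntiOn (powRatio a) (Ici 1) := by
  refine strictAntiOn_of_deriv_neg (convex_Ici 1) (continuousOn_powRatio a) fun t ht => ?_
  rw [interior_Ici, mem_Ioi] at ht
  rw [(hasDerivAt_powRatio a (one_pos.trans ht)).deriv]
  have hpow : t ^ (a - 1) < 1 := Real.rpow_lt_one_of_one_lt_of_neg ht (by linarith)
  have hpos : 0 < (t + 1) ^ (a - 1) := Real.rpow_pos_of_pos (by linarith) _
  exact div_neg_of_neg_of_pos (mul_neg_of_pos_of_neg (mul_pos ha₀ hpos) (by linarith))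
    (by positivity)

lemma tendsto_powRatio_atTop_of_neg {a : ℝ} (ha : a < 0) :
    Tendsto (powRatio a) atTop atTop := by
  have hshift : Tendsto (fun t : ℝ => t + 1) atTop atTop :=
    tendsto_atTop_add_const_right _ 1 tendsto_id
  refine tendsto_atTop_mono' _ ?_ ((tendsto_rpow_atTop (neg_pos.2 ha)).comp hshift)
  filter_upwards [eventually_ge_atTop 0] with t ht
  have ht1 : 0 < t + 1 := by linarith
  rw [Function.comp_apply, powRatio, Real.rpow_neg ht1.le, inv_eq_one_div]
  gcongr
  linarith [Real.rpow_nonneg ht a]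

lemma tendsto_powRatio_atTop_of_pos {a : ℝ} (ha : 0 < a) :
    Tendsto (powRatio a) atTop (𝓝 1) := by
  have hshift : Tendsto (fun t : ℝ => t + 1) atTop atTop :=
    tendsto_atTop_add_const_right _ 1 tendsto_id
  have hinv : Tendsto (fun t : ℝ => (t + 1)⁻¹) atTop (𝓝 0) :=
    tendsto_inv_atTop_zero.comp hshift
  have hfrac : Tendsto (fun t : ℝ => (1 - (t + 1)⁻¹) ^ a) atTop (𝓝 1) := by
    have hcont : Continuous fun x : ℝ => (1 - x) ^ a :=
      (continuous_const.sub continuous_id).rpow_const fun _ => Or.inr ha.le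
    simpa [Function.comp_def] using (hcont.tendsto 0).comp hinv
  have hsmall : Tendsto (fun t : ℝ => ((t + 1) ^ a)⁻¹) atTop (𝓝 0) :=
    tendsto_inv_atTop_zero.comp ((tendsto_rpow_atTop ha).comp hshift)
  refine Tendsto.congr' ?_ (by simpa using hfrac.add hsmall)
  filter_upwards [eventually_gt_atTop 0] with t ht
  have ht1 : 0 < t + 1 := by linarith
  have hsplit : 1 - (t + 1)⁻¹ = t / (t + 1) := by field_simp; ring
  rw [hsplit, Real.div_rpow ht.le ht1.le, powRatio, add_div, div_eq_mul_inv 1]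
  ring

lemma existsUnique_powRatio_eq_of_neg {a c : ℝ} (ha : a < 0) (hc : 2 ^ (1 - a) < c) :
    ∃! t, 1 ≤ t ∧ powRatio a t = c := by
  obtain ⟨T, hTc, hT⟩ :=
    (((tendsto_powRatio_atTop_of_neg ha).eventually_ge_atTop c).and (eventually_ge_atTop 1)).exists
  refine existsUnique_eq_of_injOn_Ici (continuousOn_powRatio a) (strictMonoOn_powRatio ha).injOn
    hT ?_
  rw [powRatio_one, uIcc_of_le (hc.le.trans hTc)]
  exact ⟨hc.le, hTc⟩

lemma existsUnique_powRatio_eq_of_pos {a c : ℝ} (ha₀ : 0 < a) (ha₁ : a < 1) (hc₁ : 1 < c)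
    (hc : c < 2 ^ (1 - a)) : ∃! t, 1 ≤ t ∧ powRatio a t = c := by
  obtain ⟨T, hTc, hT⟩ :=
    (((tendsto_powRatio_atTop_of_pos ha₀).eventually (ge_mem_nhds hc₁)).and
      (eventually_ge_atTop 1)).exists
  refine existsUnique_eq_of_injOn_Ici (continuousOn_powRatio a)
    (strictAntiOn_powRatio ha₀ ha₁).injOn hT ?_
  rw [powRatio_one, uIcc_of_ge (hTc.trans hc.le)]
  exact ⟨hTc, hc.le⟩

theorem stmt_13_general (σ : ℝ) (hσ1 : σ < 1) :
    (∀ ε : ℝ, 0 < ε →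
      (∃! t : ℝ, 1 ≤ t ∧
        (t ^ (σ - 1) + 1) / (t + 1) ^ (σ - 1) = (2 : ℝ) ^ (2 - σ) * (1 + ε)) ∧
      ∀ t : ℝ, 1 ≤ t →
        (t ^ (σ - 1) + 1) / (t + 1) ^ (σ - 1) = (2 : ℝ) ^ (2 - σ) * (1 + ε) → 1 < t) ∧
    (0 < σ → ∀ ε : ℝ, 0 < ε → ε < 1 - (2 : ℝ) ^ (σ - 1) →
      (∃! t : ℝ, 1 ≤ t ∧
        (t ^ σ + 1) / (t + 1) ^ σ = (2 : ℝ) ^ (1 - σ) * (1 - ε)) ∧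
      ∀ t : ℝ, 1 ≤ t →
        (t ^ σ + 1) / (t + 1) ^ σ = (2 : ℝ) ^ (1 - σ) * (1 - ε) → 1 < t) := by
  refine ⟨fun ε hε => ?_, fun hσ ε hε hεσ => ?_⟩
  · have hc : powRatio (σ - 1) 1 < 2 ^ (2 - σ) * (1 + ε) := by
      rw [powRatio_one, show 1 - (σ - 1) = 2 - σ by ring]
      exact lt_mul_of_one_lt_right (by positivity) (by linarith)
    refine ⟨existsUnique_powRatio_eq_of_neg (by linarith) (powRatio_one (σ - 1) ▸ hc),
      fun t ht hft => ht.lt_of_ne ?_⟩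
    rintro rfl
    exact hc.ne hft
  · have hinv : (2 : ℝ) ^ (1 - σ) * 2 ^ (σ - 1) = 1 := by
      rw [← Real.rpow_add two_pos, show 1 - σ + (σ - 1) = 0 by ring, Real.rpow_zero]
    have hpos : (0 : ℝ) < 2 ^ (1 - σ) := by positivity
    have hc : 2 ^ (1 - σ) * (1 - ε) < powRatio σ 1 := by
      rw [powRatio_one]
      exact mul_lt_of_lt_one_right hpos (by linarith)
    have hc₁ : 1 < 2 ^ (1 - σ) * (1 - ε) := by nlinarith
    refine ⟨existsUnique_powRatio_eq_of_pos hσ hσ1 hc₁ (powRatio_one σ ▸ hc),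
      fun t ht hft => ht.lt_of_ne ?_⟩
    rintro rfl
    exact hc.ne' hft

/-- Lemma B.1(i): existence, uniqueness and strict lower bound for the
solutions t^f(ε) and t^g(ε) of the two defining equations on [1,∞). -/
theorem stmt_13 (σ : ℝ) (hσ0 : 0 ≤ σ) (hσ1 : σ < 1) :
    (∀ ε : ℝ, 0 < ε →
      (∃! t : ℝ, 1 ≤ t ∧
        (t ^ (σ - 1) + 1) / (t + 1) ^ (σ - 1) = (2 : ℝ) ^ (2 - σ) * (1 + ε)) ∧
      ∀ t : ℝ, 1 ≤ t →
        (t ^ (σ - 1) + 1) / (t + 1) ^ (σ - 1) = (2 : ℝ) ^ (2 - σ) * (1 + ε) → 1 < t) ∧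
    (0 < σ → ∀ ε : ℝ, 0 < ε → ε < 1 - (2 : ℝ) ^ (σ - 1) →
      (∃! t : ℝ, 1 ≤ t ∧
        (t ^ σ + 1) / (t + 1) ^ σ = (2 : ℝ) ^ (1 - σ) * (1 - ε)) ∧
      ∀ t : ℝ, 1 ≤ t →
        (t ^ σ + 1) / (t + 1) ^ σ = (2 : ℝ) ^ (1 - σ) * (1 - ε) → 1 < t) :=
  stmt_13_general σ hσ1
end

section
/- Fix σ ∈ (0,1), ε ∈ (0, 1 − 2^(σ−1)) and reals 0 < L < U. Let K ≥ 1 and let L = c_1 < c_2 < ... < c_{K+1} = U be any points such that Φ^f(c_k, c_{k+1}) ≤ ε and Φ^g(c_k, c_{k+1}) ≤ ε for every k ∈ {1,...,K}. Define t^{f*} = exp((ln(1+ε) + (2−σ)·ln 2)/(1−σ)) − 1 and t^{g*} = (1/(2^(1−σ)·(1−ε) − 1))^(1/σ). Then t^{f*} > 1, t^{g*} > 1, and K ≥ ln(U/L)·max{1/ln(t^{f*}), 1/ln(t^{g*})}. -/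
open Real Set

lemma rpow_contOn {cc u : ℝ} (hc : 0 < cc) (e : ℝ) :
    ContinuousOn (fun t : ℝ => t ^ e) (Icc cc u) := fun t ht =>
  (Real.continuousAt_rpow_const t e (Or.inl (lt_of_lt_of_le hc ht.1).ne')).continuousWithinAt

lemma phiF_contOn {σ cc u : ℝ} (hc : 0 < cc) :
    ContinuousOn (phiF σ cc u) (Icc cc u) := by
  unfold phiF fhat fCNL
  apply ContinuousOn.div
  · exact (continuousOn_const.add (continuousOn_const.mul
      (continuousOn_id.sub continuousOn_const))).sub (rpow_contOn hc _)
  · exact rpow_contOn hc _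
  · intro t ht; exact (Real.rpow_pos_of_pos (lt_of_lt_of_le hc ht.1) _).ne'

lemma phiG_contOn {σ cc u : ℝ} (hc : 0 < cc) :
    ContinuousOn (phiG σ cc u) (Icc cc u) := by
  unfold phiG ghat gCNL
  apply ContinuousOn.div
  · exact (rpow_contOn hc _).sub (continuousOn_const.add (continuousOn_const.mul
      (continuousOn_id.sub continuousOn_const)))
  · exact rpow_contOn hc _
  · intro t ht; exact (Real.rpow_pos_of_pos (lt_of_lt_of_le hc ht.1) _).ne'

lemma mid_le_sup {h : ℝ → ℝ} {cc u m ε : ℝ}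
    (hcont : ContinuousOn h (Icc cc u)) (hm : m ∈ Icc cc u)
    (hs : sSup (h '' Icc cc u) ≤ ε) : h m ≤ ε :=
  le_trans (le_csSup (isCompact_Icc.image_of_continuousOn hcont).bddAbove ⟨m, hm, rfl⟩) hs

/-- From Φ^f ≤ ε on [cc,u], deduce u ≤ t^{f*} · cc. -/
lemma f_ratio {σ ε cc u : ℝ} (hσ0 : 0 < σ) (hσ1 : σ < 1) (hε0 : 0 < ε)
    (hc : 0 < cc) (hcu : cc < u) (h : PhiF σ cc u ≤ ε) :
    u ≤ (Real.exp ((Real.log (1 + ε) + (2 - σ) * Real.log 2) / (1 - σ)) - 1) * cc := by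
  set m := (cc + u) / 2 with hm
  have hmmem : m ∈ Icc cc u := ⟨by simp only [hm]; linarith, by simp only [hm]; linarith⟩
  have hm0 : 0 < m := lt_of_lt_of_le hc hmmem.1
  have hmid : phiF σ cc u m ≤ ε := mid_le_sup (phiF_contOn hc) hmmem h
  have hne : u - cc ≠ 0 := sub_ne_zero.mpr hcu.ne'
  have hfhat : fhat σ cc u m = (cc ^ (σ - 1) + u ^ (σ - 1)) / 2 := by
    unfold fhat fCNL
    field_simp [hm]
    ring
  have hM : (0:ℝ) < m ^ (σ - 1) := Real.rpow_pos_of_pos hm0 _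
  have hB : (0:ℝ) < u ^ (σ - 1) := Real.rpow_pos_of_pos (hc.trans hcu) _
  have hA : (0:ℝ) < cc ^ (σ - 1) := Real.rpow_pos_of_pos hc _
  have h1 : cc ^ (σ - 1) ≤ 2 * (1 + ε) * m ^ (σ - 1) := by
    have := hmid
    unfold phiF fCNL at this
    rw [hfhat, div_le_iff₀ hM] at this
    nlinarith
  -- turn into (m/cc)^(1-σ) ≤ 2*(1+ε)
  have hx : (0:ℝ) < m / cc := by positivity
  have h2 : (m / cc) ^ (1 - σ) ≤ 2 * (1 + ε) := by
    have key : (m / cc) ^ (1 - σ) = cc ^ (σ - 1) / m ^ (σ - 1) := by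
      rw [Real.div_rpow hm0.le hc.le, show σ - 1 = -(1 - σ) by ring,
        Real.rpow_neg hc.le, Real.rpow_neg hm0.le]
      have hc' : cc ^ (1 - σ) ≠ 0 := (Real.rpow_pos_of_pos hc _).ne'
      have hm' : m ^ (1 - σ) ≠ 0 := (Real.rpow_pos_of_pos hm0 _).ne'
      field_simp
    rw [key, div_le_iff₀ hM]
    linarith
  have hE : m / cc ≤ (2 * (1 + ε)) ^ ((1:ℝ) / (1 - σ)) := by
    have h1σ : (0:ℝ) < 1 - σ := by linarith
    have := Real.rpow_le_rpow (by positivity) h2 (by positivity : (0:ℝ) ≤ 1 / (1 - σ))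
    rwa [← Real.rpow_mul hx.le, mul_one_div, div_self h1σ.ne', Real.rpow_one] at this
  have hexp : Real.exp ((Real.log (1 + ε) + (2 - σ) * Real.log 2) / (1 - σ))
      = 2 * (2 * (1 + ε)) ^ ((1:ℝ) / (1 - σ)) := by
    have h1σ : (0:ℝ) < 1 - σ := by linarith
    rw [Real.rpow_def_of_pos (by positivity)]
    have e2 : (2:ℝ) * Real.exp (Real.log (2 * (1 + ε)) * (1 / (1 - σ)))
        = Real.exp (Real.log 2 + Real.log (2 * (1 + ε)) * (1 / (1 - σ))) := by
      rw [Real.exp_add, Real.exp_log (by norm_num : (0:ℝ) < 2)]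
    rw [e2]
    congr 1
    rw [Real.log_mul (by norm_num) (by positivity)]
    field_simp
    ring
  rw [hexp]
  have : m ≤ cc * (2 * (1 + ε)) ^ ((1:ℝ) / (1 - σ)) := by
    rw [div_le_iff₀ hc] at hE; linarith
  nlinarith

/-- From Φ^g ≤ ε on [cc,u], deduce u ≤ t^{g*} · cc. -/
lemma g_ratio {σ ε cc u : ℝ} (hσ0 : 0 < σ) (hσ1 : σ < 1) (hε0 : 0 < ε)
    (hε1 : ε < 1 - (2 : ℝ) ^ (σ - 1))
    (hc : 0 < cc) (hcu : cc < u) (h : PhiG σ cc u ≤ ε) :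
    u ≤ ((1 / ((2:ℝ) ^ (1 - σ) * (1 - ε) - 1)) ^ ((1:ℝ) / σ)) * cc := by
  set m := (cc + u) / 2 with hm
  have hmmem : m ∈ Icc cc u := ⟨by simp only [hm]; linarith, by simp only [hm]; linarith⟩
  have hm0 : 0 < m := lt_of_lt_of_le hc hmmem.1
  have hu0 : 0 < u := hc.trans hcu
  have hmid : phiG σ cc u m ≤ ε := mid_le_sup (phiG_contOn hc) hmmem h
  have hne : u - cc ≠ 0 := sub_ne_zero.mpr hcu.ne'
  have hghat : ghat σ cc u m = (cc ^ σ + u ^ σ) / 2 := by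
    unfold ghat gCNL
    field_simp [hm]
    ring
  have hM : (0:ℝ) < m ^ σ := Real.rpow_pos_of_pos hm0 _
  have hQ : (0:ℝ) < u ^ σ := Real.rpow_pos_of_pos hu0 _
  have hP : (0:ℝ) < cc ^ σ := Real.rpow_pos_of_pos hc _
  have h2σ : (0:ℝ) < (2:ℝ) ^ σ := Real.rpow_pos_of_pos (by norm_num) _
  have hβ : (1:ℝ) < (2:ℝ) ^ (1 - σ) * (1 - ε) := by
    have h1 : (2:ℝ) ^ (σ - 1) < 1 - ε := by linarith
    have h2 : (0:ℝ) < (2:ℝ) ^ (1 - σ) := Real.rpow_pos_of_pos (by norm_num) _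
    have h3 : (2:ℝ) ^ (1 - σ) * (2:ℝ) ^ (σ - 1) = 1 := by
      rw [← Real.rpow_add (by norm_num)]; norm_num
    nlinarith
  have h1 : (1 - ε) * m ^ σ ≤ (cc ^ σ + u ^ σ) / 2 := by
    have := hmid
    unfold phiG gCNL at this
    rw [hghat, div_le_iff₀ hM] at this
    nlinarith
  have hmu : (u / 2) ^ σ ≤ m ^ σ :=
    Real.rpow_le_rpow (by positivity) (by simp only [hm]; linarith) hσ0.le
  have hhalf : (u / 2) ^ σ = u ^ σ / (2:ℝ) ^ σ := Real.div_rpow hu0.le (by norm_num) _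
  have h21σ : (2:ℝ) ^ (1 - σ) = 2 / (2:ℝ) ^ σ := by
    rw [Real.rpow_sub (by norm_num), Real.rpow_one]
  have hε1' : (0:ℝ) < 1 - ε := by
    have : (0:ℝ) < (2:ℝ) ^ (σ - 1) := Real.rpow_pos_of_pos (by norm_num) _
    linarith
  have h3 : ((2:ℝ) ^ (1 - σ) * (1 - ε) - 1) * u ^ σ ≤ cc ^ σ := by
    have h4 : (1 - ε) * (u ^ σ / (2:ℝ) ^ σ) ≤ (cc ^ σ + u ^ σ) / 2 := by
      calc (1 - ε) * (u ^ σ / (2:ℝ) ^ σ) ≤ (1 - ε) * m ^ σ := by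
            rw [← hhalf]; exact mul_le_mul_of_nonneg_left hmu hε1'.le
        _ ≤ _ := h1
    have h5 : (2:ℝ) ^ (1 - σ) * (1 - ε) * u ^ σ ≤ cc ^ σ + u ^ σ := by
      have e : (2:ℝ) ^ (1 - σ) * (1 - ε) * u ^ σ = 2 * ((1 - ε) * (u ^ σ / (2:ℝ) ^ σ)) := by
        rw [h21σ]; field_simp
      rw [e]; linarith
    nlinarith [h5]
  set β := (2:ℝ) ^ (1 - σ) * (1 - ε) - 1 with hβdef
  have hβ0 : 0 < β := by simp only [hβdef]; linarith
  have h4 : u ^ σ ≤ cc ^ σ * (1 / β) := by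
    rw [mul_one_div, le_div_iff₀ hβ0]; nlinarith
  have h5 : u ≤ (cc ^ σ * (1 / β)) ^ ((1:ℝ)/σ) := by
    have := Real.rpow_le_rpow hQ.le h4 (by positivity : (0:ℝ) ≤ 1/σ)
    rwa [← Real.rpow_mul hu0.le, mul_one_div, div_self hσ0.ne', Real.rpow_one] at this
  calc u ≤ (cc ^ σ * (1 / β)) ^ ((1:ℝ)/σ) := h5
    _ = ((1/β) ^ ((1:ℝ)/σ)) * cc := by
      rw [Real.mul_rpow hP.le (by positivity), ← Real.rpow_mul hc.le, mul_one_div,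
        div_self hσ0.ne', Real.rpow_one, mul_comm]
lemma chain_bound {K : ℕ} {c : ℕ → ℝ} {t L U : ℝ} (hL : 0 < L) (hLU : L < U)
    (ht : 1 < t) (hc1 : c 1 = L) (hcK : c (K + 1) = U)
    (hstep : ∀ k, 1 ≤ k → k ≤ K → c (k + 1) ≤ t * c k) :
    Real.log (U / L) * (1 / Real.log t) ≤ (K : ℝ) := by
  have ht0 : (0:ℝ) < t := by linarith
  have hb : ∀ j : ℕ, j ≤ K → c (j + 1) ≤ t ^ j * L := by
    intro j
    induction j with
    | zero => intro _; simp [hc1]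
    | succ n ih =>
      intro hjK
      have h1 := hstep (n + 1) (by omega) (by omega)
      have h2 := ih (by omega)
      calc c (n + 1 + 1) ≤ t * c (n + 1) := h1
        _ ≤ t * (t ^ n * L) := mul_le_mul_of_nonneg_left h2 ht0.le
        _ = t ^ (n + 1) * L := by ring
  have hU : U ≤ t ^ K * L := hcK ▸ hb K le_rfl
  have hlogt : 0 < Real.log t := Real.log_pos ht
  have h1 : Real.log (U / L) ≤ (K : ℝ) * Real.log t := by
    have hd : U / L ≤ t ^ K := by rw [div_le_iff₀ hL]; linarith
    calc Real.log (U / L) ≤ Real.log (t ^ K) :=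
          Real.log_le_log (by have : 0 < U := hL.trans hLU; positivity) hd
      _ = (K : ℝ) * Real.log t := by rw [Real.log_pow]
  rw [mul_one_div, div_le_iff₀ hlogt]
  linarith


/-- Corollary 1: explicit closed-form lower bounds on the number of
sub-intervals of any ε-accurate partition. -/
theorem stmt_15 (σ ε L U : ℝ) (hσ0 : 0 < σ) (hσ1 : σ < 1)
    (hε0 : 0 < ε) (hε1 : ε < 1 - (2 : ℝ) ^ (σ - 1))
    (hL : 0 < L) (hLU : L < U)
    (K : ℕ) (hK : 1 ≤ K) (c : ℕ → ℝ)
    (hc1 : c 1 = L) (hcK : c (K + 1) = U)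
    (hmono : ∀ k, 1 ≤ k → k ≤ K → c k < c (k + 1))
    (hfeas : ∀ k, 1 ≤ k → k ≤ K →
      PhiF σ (c k) (c (k + 1)) ≤ ε ∧ PhiG σ (c k) (c (k + 1)) ≤ ε) :
    1 < Real.exp ((Real.log (1 + ε) + (2 - σ) * Real.log 2) / (1 - σ)) - 1 ∧
    1 < (1 / ((2 : ℝ) ^ (1 - σ) * (1 - ε) - 1)) ^ (1 / σ) ∧
    Real.log (U / L) *
        max (1 / Real.log (Real.exp ((Real.log (1 + ε) + (2 - σ) * Real.log 2) / (1 - σ)) - 1))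
          (1 / Real.log ((1 / ((2 : ℝ) ^ (1 - σ) * (1 - ε) - 1)) ^ (1 / σ))) ≤ (K : ℝ) := by
  have h1σ : (0:ℝ) < 1 - σ := by linarith
  set tf := Real.exp ((Real.log (1 + ε) + (2 - σ) * Real.log 2) / (1 - σ)) - 1 with htfdef
  set tg := (1 / ((2 : ℝ) ^ (1 - σ) * (1 - ε) - 1)) ^ (1 / σ) with htgdef
  -- positivity of partition points
  have hpos : ∀ j : ℕ, j ≤ K → 0 < c (j + 1) := by
    intro j
    induction j with
    | zero => intro _; rw [hc1]; exact hL
    | succ n ih =>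
      intro hjK
      exact (ih (by omega)).trans (hmono (n + 1) (by omega) (by omega))
  have hposk : ∀ k, 1 ≤ k → k ≤ K → 0 < c k := by
    intro k hk1 hkK
    obtain ⟨j, rfl⟩ : ∃ j, k = j + 1 := ⟨k - 1, by omega⟩
    exact hpos j (by omega)
  -- tf > 1
  have htf : 1 < tf := by
    rw [htfdef]
    have hlog2 : (0:ℝ) < Real.log 2 := Real.log_pos (by norm_num)
    have hlogε : (0:ℝ) < Real.log (1 + ε) := Real.log_pos (by linarith)
    have : Real.log 2 < (Real.log (1 + ε) + (2 - σ) * Real.log 2) / (1 - σ) := by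
      rw [lt_div_iff₀ h1σ]; nlinarith
    have h2 : (2:ℝ) < Real.exp ((Real.log (1 + ε) + (2 - σ) * Real.log 2) / (1 - σ)) := by
      calc (2:ℝ) = Real.exp (Real.log 2) := (Real.exp_log (by norm_num)).symm
        _ < _ := Real.exp_lt_exp.mpr this
    linarith
  -- β and tg > 1
  have hε1' : (0:ℝ) < 1 - ε := by
    have : (0:ℝ) < (2:ℝ) ^ (σ - 1) := Real.rpow_pos_of_pos (by norm_num) _
    linarith
  have hβ : (1:ℝ) < (2:ℝ) ^ (1 - σ) * (1 - ε) := by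
    have h1 : (2:ℝ) ^ (σ - 1) < 1 - ε := by linarith
    have h2 : (0:ℝ) < (2:ℝ) ^ (1 - σ) := Real.rpow_pos_of_pos (by norm_num) _
    have h3 : (2:ℝ) ^ (1 - σ) * (2:ℝ) ^ (σ - 1) = 1 := by
      rw [← Real.rpow_add (by norm_num)]; norm_num
    nlinarith
  have hβlt : (2:ℝ) ^ (1 - σ) * (1 - ε) - 1 < 1 := by
    have h2 : (2:ℝ) ^ (1 - σ) < 2 := by
      calc (2:ℝ) ^ (1 - σ) < (2:ℝ) ^ (1:ℝ) :=
            Real.rpow_lt_rpow_left_iff (by norm_num) |>.mpr (by linarith)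
        _ = 2 := Real.rpow_one 2
    nlinarith [Real.rpow_pos_of_pos (show (0:ℝ) < 2 by norm_num) (1 - σ)]
  have htg : 1 < tg := by
    rw [htgdef]
    have hβ0 : (0:ℝ) < (2:ℝ) ^ (1 - σ) * (1 - ε) - 1 := by linarith
    apply Real.one_lt_rpow_iff_of_pos (div_pos one_pos hβ0) |>.mpr
    left
    constructor
    · rw [lt_div_iff₀ (by linarith)]; linarith
    · positivity
  refine ⟨htf, htg, ?_⟩
  have hstepf : ∀ k, 1 ≤ k → k ≤ K → c (k + 1) ≤ tf * c k := fun k hk1 hkK =>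
    f_ratio hσ0 hσ1 hε0 (hposk k hk1 hkK) (hmono k hk1 hkK) (hfeas k hk1 hkK).1
  have hstepg : ∀ k, 1 ≤ k → k ≤ K → c (k + 1) ≤ tg * c k := fun k hk1 hkK =>
    g_ratio hσ0 hσ1 hε0 hε1 (hposk k hk1 hkK) (hmono k hk1 hkK) (hfeas k hk1 hkK).2
  have hbf := chain_bound hL hLU htf hc1 hcK hstepf
  have hbg := chain_bound hL hLU htg hc1 hcK hstepg
  rcases max_choice (1 / Real.log tf) (1 / Real.log tg) with hmx | hmx <;> rw [hmx]
  · exact hbf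
  · exact hbg
end

section
/- Let X be a nonempty set, ε ∈ [0,1), δ ∈ [0,1), and F, F̂ : X → ℝ with F(x) ≥ 0 for all x ∈ X, such that F(x) ≤ F̂(x) ≤ ((1+ε)/(1−ε))·F(x) for every x ∈ X. Let x* ∈ X maximize F over X, let x̂ ∈ X maximize F̂ over X, and let x̃ ∈ X. Suppose there are reals 0 < L̂ ≤ Û with L̂ ≤ F̂(x̃), F̂(x̂) ≤ Û, and (Û − L̂)/L̂ ≤ δ. Then ((1−δ)·(1−ε)/(1+ε))·F(x*) ≤ F(x̃) ≤ F(x*). -/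
/-- Theorem 5: performance guarantee of the bisection method. -/
theorem stmt_16 {X : Type*} (ε δ : ℝ) (hε0 : 0 ≤ ε) (hε1 : ε < 1)
    (hδ0 : 0 ≤ δ) (hδ1 : δ < 1)
    (F Fh : X → ℝ) (hF0 : ∀ x, 0 ≤ F x)
    (hsand : ∀ x, F x ≤ Fh x ∧ Fh x ≤ ((1 + ε) / (1 - ε)) * F x)
    (xstar xhat xtilde : X)
    (hxstar : ∀ x, F x ≤ F xstar) (hxhat : ∀ x, Fh x ≤ Fh xhat)
    (Lb Ub : ℝ) (hLb : 0 < Lb) (hLbUb : Lb ≤ Ub)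
    (hLbF : Lb ≤ Fh xtilde) (hFUb : Fh xhat ≤ Ub)
    (hgap : (Ub - Lb) / Lb ≤ δ) :
    ((1 - δ) * (1 - ε) / (1 + ε)) * F xstar ≤ F xtilde ∧ F xtilde ≤ F xstar := by
  have ha : (0:ℝ) < 1 - ε := by linarith
  have hb : (0:ℝ) < 1 + ε := by linarith
  -- gap: Ub ≤ (1+δ) Lb
  have hUb : Ub - Lb ≤ δ * Lb := by
    have := (div_le_iff₀ hLb).mp hgap
    linarith
  -- Lb ≥ (1-δ) Ub
  have hLb' : (1 - δ) * Ub ≤ Lb := by nlinarith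
  -- Fh xtilde ≥ (1-δ) * F xstar
  have h1 : (1 - δ) * F xstar ≤ Fh xtilde := by
    have h2 : F xstar ≤ Fh xstar := (hsand xstar).1
    have h3 : Fh xstar ≤ Fh xhat := hxhat xstar
    have h4 : (1 - δ) * F xstar ≤ (1 - δ) * Ub := by nlinarith
    linarith
  -- F xtilde ≥ (1-ε)/(1+ε) * Fh xtilde
  have h5 : Fh xtilde ≤ ((1 + ε) / (1 - ε)) * F xtilde := (hsand xtilde).2
  constructor
  · rw [div_mul_eq_mul_div, div_le_iff₀ hb]
    rw [div_mul_eq_mul_div, le_div_iff₀ ha] at h5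
    nlinarith [hF0 xstar, hF0 xtilde]
  · exact hxstar xtilde
end

section
/- For all reals T > 0 and C ≥ 0: (6C + 9T)/√(C + 2T) + 9·√(3T) ≥ 7·(√(C + 2T) + √(3T)) if and only if C = T. -/
/-- Key algebraic equivalence in the NP-hardness reduction (Theorem 1). -/
theorem stmt_19 (T C : ℝ) (hT : 0 < T) (hC : 0 ≤ C) :
    (6 * C + 9 * T) / Real.sqrt (C + 2 * T) + 9 * Real.sqrt (3 * T) ≥
        7 * (Real.sqrt (C + 2 * T) + Real.sqrt (3 * T)) ↔ C = T := by
  have h1 : (0:ℝ) < C + 2 * T := by linarith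
  have h3 : (0:ℝ) < 3 * T := by linarith
  set a := Real.sqrt (C + 2 * T) with ha
  set b := Real.sqrt (3 * T) with hb
  have hpa : 0 < a := Real.sqrt_pos.mpr h1
  have hpb : 0 < b := Real.sqrt_pos.mpr h3
  have ha2 : a ^ 2 = C + 2 * T := Real.sq_sqrt h1.le
  have hb2 : b ^ 2 = 3 * T := Real.sq_sqrt h3.le
  constructor
  · intro h
    have h2 : 6 * C + 9 * T + 9 * b * a ≥ 7 * (a + b) * a := by
      have := mul_le_mul_of_nonneg_right h hpa.le
      calc 7 * (a + b) * a ≤ ((6 * C + 9 * T) / a + 9 * b) * a := this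
        _ = 6 * C + 9 * T + 9 * b * a := by field_simp
    have key : 2 * (a * b) ≥ C + 5 * T := by nlinarith
    have key2 : (C + 5 * T) ^ 2 ≤ (2 * (a * b)) ^ 2 := by
      apply pow_le_pow_left₀ (by linarith) key
    nlinarith [sq_nonneg (C - T)]
  · intro h
    have hab : a = b := by rw [ha, hb, h]; congr 1; ring
    have hdiv : (6 * C + 9 * T) / a = 5 * a := by
      rw [div_eq_iff hpa.ne']; nlinarith
    rw [hdiv, hab]
    nlinarith
end
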